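/- arXiv:1504.02977 — 9 statements merged into one kernel-verified Lean document; each statement's English description precedes it below -/
import Mathlib

section
/- Let π be a group, N a normal subgroup of index 2^s such that the quotient π/N is an elementary abelian 2-group, and let π act ℂ-linearly on a complex vector space V via operators M_γ. Let {F_k} be the N-unipotent filtration of V. For a homomorphism ρ : π → ℤ/2ℤ vanishing on N, define the twisted variation operator Var^ρ_γ θ = M_γ θ − (−1)^{ρ(γ)} θ. Then for every k ≥ 0, an element θ ∈ V belongs to F_k if and only if θ admits a decomposition θ = Σ_ρ θ_ρ, the sum being over all 2^s homomorphisms ρ : π → ℤ/2ℤ vanishing on N, such that Var^ρ_γ θ_ρ ∈ F_{k−1} for all γ ∈ π and all such ρ. Moreover, if θ ∈ F_k, one can take θ_ρ = 2^{−s} Σ_{j=1}^{2^s} (−1)^{ρ(γ_j)} M_{γ_j} θ, where γ_1 = 1, γ_2, …, γ_{2^s} ∈ π are representatives of the 2^s cosets of N in π. -/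
/-!
The homomorphisms `ρ : π → ℤ/2` vanishing on `N` are the `ℤ/2`-valued characters of the
elementary abelian group `π ⧸ N ≅ (ℤ/2)ˢ`. By duality there are `2ˢ` of them and they satisfy
`∑_ρ (-1)^ρ(γ) = 2ˢ` for `γ ∈ N` and `0` otherwise, so the averages `θ_ρ` sum to `θ`.
Since `N` is normal, every `F_k` is `π`-stable, and for `θ ∈ F_k` the vector `(-1)^ρ(g) M_g θ`
modulo `F_{k-1}` depends only on the coset `gN`. Left multiplication by `γ` permutes the cosets,
whence `M_γ θ_ρ ≡ (-1)^ρ(γ) θ_ρ` modulo `F_{k-1}`. Conversely, for `γ ∈ N` every twisted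
variation is an ordinary one, so each `θ_ρ`, and hence `θ`, lies in `F_k`.
-/

open Function

theorem ZMod.neg_one_pow_val_add {R : Type*} [Ring R] (a b : ZMod 2) :
    (-1 : R) ^ (a + b).val = (-1) ^ a.val * (-1) ^ b.val := by
  rw [ZMod.val_add, ← neg_one_pow_eq_pow_mod_two, pow_add]

section ExponentTwo

variable {W : Type*} [AddGroup W]

abbrev addCommGroupOfAddSelfEqZero (hW : ∀ x : W, x + x = 0) : AddCommGroup W where
  add_comm := AddCommute.of_addOrderOf_dvd_two fun x => addOrderOf_dvd_of_nsmul_eq_zero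
    (by rw [two_nsmul, hW])

theorem card_addMonoidHom_zmodTwo (hW : ∀ x : W, x + x = 0) [Finite W] :
    Nat.card (W →+ ZMod 2) = Nat.card W := by
  let := addCommGroupOfAddSelfEqZero hW
  let := AddCommGroup.zmodModule (n := 2) (G := W) fun x => by rw [two_nsmul, hW]
  calc Nat.card (W →+ ZMod 2) = Nat.card (Module.Dual (ZMod 2) W) :=
        Nat.card_congr (AddMonoidHom.toZModLinearMapEquiv 2).toEquiv
    _ = Nat.card W :=
        Nat.card_congr (LinearEquiv.ofFinrankEq _ _ Subspace.dual_finrank_eq).toEquiv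

theorem eq_zero_of_forall_addMonoidHom_zmodTwo (hW : ∀ x : W, x + x = 0) {x : W}
    (hx : ∀ f : W →+ ZMod 2, f x = 0) : x = 0 := by
  let := addCommGroupOfAddSelfEqZero hW
  let := AddCommGroup.zmodModule (n := 2) (G := W) fun x => by rw [two_nsmul, hW]
  exact (Module.forall_dual_apply_eq_zero_iff (ZMod 2) x).1 fun φ =>
    hx ((AddMonoidHom.toZModLinearMapEquiv 2).symm φ)

theorem sum_neg_one_pow_addMonoidHom_zmodTwo [DecidableEq W] (hW : ∀ x : W, x + x = 0)
    [Finite W] [Fintype (W →+ ZMod 2)] (x : W) :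
    ∑ f : W →+ ZMod 2, (-1 : ℂ) ^ (f x).val = if x = 0 then (Nat.card W : ℂ) else 0 := by
  let ψ : AddChar (W →+ ZMod 2) ℂ :=
    { toFun f := (-1) ^ (f x).val
      map_zero_eq_one' := by simp
      map_add_eq_mul' f g := ZMod.neg_one_pow_val_add _ _ }
  have hψ : ψ = 0 ↔ x = 0 := by
    refine ⟨fun h => eq_zero_of_forall_addMonoidHom_zmodTwo hW fun f => ?_, fun h => ?_⟩
    · have hf : (-1 : ℂ) ^ (f x).val = 1 := DFunLike.congr_fun h f
      generalize f x = a at hf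
      fin_cases a
      · rfl
      · norm_num [ZMod.val] at hf
    · ext f; simp [ψ, h]
  classical
  calc ∑ f : W →+ ZMod 2, (-1 : ℂ) ^ (f x).val = ∑ f, ψ f := rfl
    _ = if ψ = 0 then (Fintype.card (W →+ ZMod 2) : ℂ) else 0 := ψ.sum_eq_ite
    _ = _ := by simp only [hψ, ← Nat.card_eq_fintype_card, card_addMonoidHom_zmodTwo hW]

end ExponentTwo

abbrev SignCharacter {π : Type*} [Group π] (N : Subgroup π) : Type _ :=
  {ρ : π → ZMod 2 // (∀ a b : π, ρ (a * b) = ρ a + ρ b) ∧ ∀ γ ∈ N, ρ γ = 0}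

namespace SignCharacter

variable {π : Type*} [Group π] {N : Subgroup π}

theorem map_mul (ρ : SignCharacter N) (a b : π) : ρ.1 (a * b) = ρ.1 a + ρ.1 b := ρ.2.1 a b

theorem map_of_mem (ρ : SignCharacter N) {γ : π} (hγ : γ ∈ N) : ρ.1 γ = 0 := ρ.2.2 γ hγ

def sign (ρ : SignCharacter N) : π →* ℂ where
  toFun γ := (-1) ^ (ρ.1 γ).val
  map_one' := by rw [ρ.map_of_mem N.one_mem, ZMod.val_zero, pow_zero]
  map_mul' a b := by rw [ρ.map_mul, ZMod.neg_one_pow_val_add]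

theorem sign_apply (ρ : SignCharacter N) (γ : π) : ρ.sign γ = (-1) ^ (ρ.1 γ).val := rfl

theorem sign_mul_self (ρ : SignCharacter N) (γ : π) : ρ.sign γ * ρ.sign γ = 1 := by
  rw [sign_apply, ← mul_pow, neg_one_mul, neg_neg, one_pow]

theorem sign_of_mem (ρ : SignCharacter N) {γ : π} (hγ : γ ∈ N) : ρ.sign γ = 1 := by
  rw [sign_apply, ρ.map_of_mem hγ, ZMod.val_zero, pow_zero]

variable [N.Normal]

def equivAddMonoidHom : SignCharacter N ≃ (Additive (π ⧸ N) →+ ZMod 2) where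
  toFun ρ := MonoidHom.toAdditiveLeft <| QuotientGroup.lift N
    { toFun γ := Multiplicative.ofAdd (ρ.1 γ)
      map_one' := by rw [ρ.map_of_mem N.one_mem, ofAdd_zero]
      map_mul' a b := by rw [ρ.map_mul, ofAdd_add] }
    fun γ hγ => by simp [ρ.map_of_mem hγ]
  invFun f := ⟨fun γ => f (.ofMul γ),
    fun a b => by simp only [QuotientGroup.mk_mul, ofMul_mul, map_add],
    fun γ hγ => by simp only [(QuotientGroup.eq_one_iff γ).2 hγ, ofMul_one, map_zero]⟩
  left_inv ρ := rfl
  right_inv f := by ext; rfl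

instance [N.FiniteIndex] : Finite (SignCharacter N) :=
  have : Finite (Additive (π ⧸ N) →+ ZMod 2) := Finite.of_injective _ DFunLike.coe_injective
  .of_equiv _ equivAddMonoidHom.symm

theorem sum_sign [N.FiniteIndex] [Fintype (SignCharacter N)] [DecidablePred (· ∈ N)]
    (hsq : ∀ γ : π, γ * γ ∈ N) (γ : π) :
    ∑ ρ : SignCharacter N, ρ.sign γ = if γ ∈ N then (N.index : ℂ) else 0 := by
  classical
  have hW : ∀ x : Additive (π ⧸ N), x + x = 0 := by
    intro x
    obtain ⟨q, rfl⟩ := Additive.ofMul.surjective x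
    obtain ⟨g, rfl⟩ := QuotientGroup.mk_surjective q
    exact (QuotientGroup.eq_one_iff _).2 (hsq g)
  let : Fintype (Additive (π ⧸ N) →+ ZMod 2) := .ofEquiv _ equivAddMonoidHom
  rw [← equivAddMonoidHom.symm.sum_comp]
  refine (sum_neg_one_pow_addMonoidHom_zmodTwo hW (.ofMul (γ : π ⧸ N))).trans ?_
  simp only [ofMul_eq_zero, QuotientGroup.eq_one_iff, N.index_eq_card]
  rfl

end SignCharacter

section Representation

variable {π R V : Type*} [Group π] [Ring R] [AddCommGroup V] [Module R V]

theorem map_sub_map_conj (M : π →* (V →ₗ[R] V)) (γ δ : π) (θ : V) :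
    M δ (M γ θ) - M γ θ = M γ (M (γ⁻¹ * δ * γ) θ - θ) := by
  rw [map_sub, ← Module.End.mul_apply, ← map_mul, ← Module.End.mul_apply, ← map_mul]
  group

theorem map_mem_of_unipotentFiltration {N : Subgroup π} (hN : N.Normal)
    {M : π →* (V →ₗ[R] V)} {F : ℤ → Submodule R V} (hFneg : ∀ k : ℤ, k ≤ -1 → F k = ⊥)
    (hFdef : ∀ k : ℤ, 0 ≤ k → ∀ θ : V, θ ∈ F k ↔ ∀ γ ∈ N, M γ θ - θ ∈ F (k - 1))
    (k : ℤ) (γ : π) {θ : V} (hθ : θ ∈ F k) : M γ θ ∈ F k := by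
  have mem_bot (k : ℤ) (hk : k ≤ -1) (γ : π) (θ : V) (hθ : θ ∈ F k) : M γ θ ∈ F k := by
    rw [hFneg k hk, Submodule.mem_bot] at hθ ⊢
    rw [hθ, map_zero]
  induction k using Int.inductionOn' (b := -1) generalizing γ θ with
  | zero => exact mem_bot _ le_rfl γ θ hθ
  | pred n hn _ => exact mem_bot _ (by omega) γ θ hθ
  | succ n hn ih =>
    rw [hFdef _ (by omega), add_sub_cancel_right] at hθ ⊢
    intro δ hδ
    rw [map_sub_map_conj]
    exact ih γ (hθ _ (by simpa using hN.conj_mem δ hδ γ⁻¹))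

end Representation

section TwistedSum

variable {π ι R V : Type*} [Group π] [Fintype ι] [AddCommGroup V]

theorem sum_comp_mul_left_of_bijective_mk {A : Type*} [AddCommMonoid A] {N : Subgroup π}
    {γ : ι → π} (hγ : Bijective fun j => (γ j : π ⧸ N)) {f : π → A}
    (hf : ∀ a, ∀ n ∈ N, f (a * n) = f a) (g : π) :
    ∑ j, f (g * γ j) = ∑ j, f (γ j) := by
  let e := Equiv.ofBijective _ hγ
  let σ : Equiv.Perm ι := (e.trans (MulAction.toPerm g)).trans e.symm
  have hσ (j : ι) : (γ (σ j) : π ⧸ N) = (g * γ j : π) := e.apply_symm_apply _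
  calc ∑ j, f (g * γ j) = ∑ j, f (γ (σ j)) := Finset.sum_congr rfl fun j _ => by
        rw [← hf (γ (σ j)) _ (QuotientGroup.eq.1 (hσ j)), mul_inv_cancel_left]
    _ = ∑ j, f (γ j) := Equiv.sum_comp σ (f ∘ γ)

variable [CommRing R] [Module R V]

def twistedSum (M : π →* (V →ₗ[R] V)) (χ : π →* R) (γ : ι → π) (θ : V) : V :=
  ∑ j, χ (γ j) • M (γ j) θ

theorem smul_map_twistedSum (M : π →* (V →ₗ[R] V)) (χ : π →* R) (γ : ι → π) (θ : V) (g : π) :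
    χ g • M g (twistedSum M χ γ θ) = ∑ j, χ (g * γ j) • M (g * γ j) θ := by
  simp only [twistedSum, map_sum, map_smul, Finset.smul_sum, smul_smul, map_mul,
    Module.End.mul_apply]

theorem smul_map_twistedSum_sub_mem {N : Subgroup π} (M : π →* (V →ₗ[R] V)) {χ : π →* R}
    (hχ : ∀ n ∈ N, χ n = 1) {T : Submodule R V} (hT : ∀ g, ∀ v ∈ T, M g v ∈ T) {θ : V}
    (hθ : ∀ n ∈ N, M n θ - θ ∈ T) {γ : ι → π} (hγ : Bijective fun j => (γ j : π ⧸ N)) (g : π) :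
    χ g • M g (twistedSum M χ γ θ) - twistedSum M χ γ θ ∈ T := by
  let f (a : π) : V ⧸ T := T.mkQ (χ a • M a θ)
  have hf (a : π) (n : π) (hn : n ∈ N) : f (a * n) = f a := by
    simp only [f, Submodule.mkQ_apply, Submodule.Quotient.eq, map_mul, hχ n hn, mul_one,
      Module.End.mul_apply, ← smul_sub, ← map_sub]
    exact T.smul_mem _ (hT a _ (hθ n hn))
  rw [← Submodule.Quotient.eq]
  calc T.mkQ (χ g • M g (twistedSum M χ γ θ)) = ∑ j, f (g * γ j) := by
        rw [smul_map_twistedSum, map_sum]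
    _ = ∑ j, f (γ j) := sum_comp_mul_left_of_bijective_mk hγ hf g
    _ = T.mkQ (twistedSum M χ γ θ) := by rw [twistedSum, map_sum]

end TwistedSum

namespace SignCharacter

variable {π ι V : Type*} [Group π] [Fintype ι] [AddCommGroup V] [Module ℂ V] {N : Subgroup π}

theorem map_twistedSum_sub_sign_smul_mem (ρ : SignCharacter N) (M : π →* (V →ₗ[ℂ] V))
    {T : Submodule ℂ V} (hT : ∀ g, ∀ v ∈ T, M g v ∈ T) {θ : V} (hθ : ∀ n ∈ N, M n θ - θ ∈ T)
    {γ : ι → π} (hγ : Bijective fun j => (γ j : π ⧸ N)) (g : π) :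
    M g (twistedSum M ρ.sign γ θ) - ρ.sign g • twistedSum M ρ.sign γ θ ∈ T := by
  have h := T.smul_mem (ρ.sign g)
    (smul_map_twistedSum_sub_mem M (fun _ => ρ.sign_of_mem) hT hθ hγ g)
  rwa [smul_sub, smul_smul, sign_mul_self, one_smul] at h

theorem sum_twistedSum_sign [N.Normal] [N.FiniteIndex] [Fintype (SignCharacter N)]
    (hsq : ∀ γ : π, γ * γ ∈ N) (M : π →* (V →ₗ[ℂ] V)) (θ : V) {γ : ι → π} {j₀ : ι}
    (hj₀ : γ j₀ = 1) (hγ : Injective fun j => (γ j : π ⧸ N)) :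
    ∑ ρ : SignCharacter N, twistedSum M ρ.sign γ θ = (N.index : ℂ) • θ := by
  classical
  have hmem (j : ι) : γ j ∈ N ↔ j = j₀ := by
    rw [← QuotientGroup.eq_one_iff, ← hγ.eq_iff, hj₀, QuotientGroup.mk_one]
  simp only [twistedSum]
  rw [Finset.sum_comm]
  simp only [← Finset.sum_smul, sum_sign hsq, ite_smul, zero_smul, hmem, Finset.sum_ite_eq',
    Finset.mem_univ, if_true, hj₀, map_one, Module.End.one_apply]

end SignCharacter

theorem Subgroup.exists_bijective_mk_of_card_eq {π ι : Type*} [Group π] (N : Subgroup π)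
    [N.FiniteIndex] [Finite ι] (hι : Nat.card ι = N.index) (i₀ : ι) :
    ∃ γ : ι → π, γ i₀ = 1 ∧ Bijective fun i => (γ i : π ⧸ N) := by
  obtain ⟨e⟩ : Nonempty (ι ≃ π ⧸ N) := Finite.card_eq.1 (hι.trans N.index_eq_card)
  let g₀ := (e i₀).out
  refine ⟨fun i => g₀⁻¹ * (e i).out, inv_mul_cancel _, ?_⟩
  convert (e.trans (MulAction.toPerm g₀⁻¹)).bijective using 1
  funext i
  exact MulAction.Quotient.mk_smul_out N g₀⁻¹ (e i)

/-- Let `N` be a normal subgroup of `π` of index `2 ^ s` whose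
quotient is an elementary abelian `2`-group (`γ * γ ∈ N` for all `γ`), and let
`π` act `ℂ`-linearly on a complex vector space `V` via operators `M γ`.  Let
`F : ℤ → Submodule ℂ V` be the `N`-unipotent filtration.  For a homomorphism
`ρ : π → ℤ/2` vanishing on `N`, the twisted variation operator is
`Var^ρ_γ θ = M γ θ - (-1)^(ρ γ) • θ`.  Then for `k ≥ 0`:
`θ ∈ F k` iff `θ` decomposes as `θ = ∑_ρ θ_ρ` (sum over all homomorphisms
`ρ : π → ℤ/2` vanishing on `N`) with `Var^ρ_γ θ_ρ ∈ F (k-1)` for all `γ ∈ π`;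
moreover, if `θ ∈ F k` one can take
`θ_ρ = 2⁻ˢ • ∑_{j} (-1)^(ρ (γ_j)) • M (γ_j) θ`,
where `γ_1 = 1, γ_2, …, γ_{2^s}` are representatives of the cosets of `N`. -/
theorem unipotent_filtration_twisted_decomposition
    {π : Type*} [Group π] (N : Subgroup π) (hN : N.Normal)
    (s : ℕ) (hindex : N.index = 2 ^ s)
    (hsq : ∀ γ : π, γ * γ ∈ N)
    {V : Type*} [AddCommGroup V] [Module ℂ V]
    (M : π →* (V →ₗ[ℂ] V))
    (F : ℤ → Submodule ℂ V)
    (hFneg : ∀ k : ℤ, k ≤ -1 → F k = ⊥)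
    (hFdef : ∀ k : ℤ, 0 ≤ k → ∀ θ : V, θ ∈ F k ↔ ∀ γ ∈ N, M γ θ - θ ∈ F (k - 1))
    (k : ℤ) (hk : 0 ≤ k) (θ : V) :
    (θ ∈ F k ↔
      ∃ Θ : {ρ : π → ZMod 2 //
              (∀ a b : π, ρ (a * b) = ρ a + ρ b) ∧ ∀ γ ∈ N, ρ γ = 0} → V,
        θ = ∑ᶠ ρ, Θ ρ ∧
        ∀ ρ, ∀ γ : π,
          M γ (Θ ρ) - ((-1 : ℂ) ^ (ρ.1 γ).val) • Θ ρ ∈ F (k - 1)) ∧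
    (θ ∈ F k →
      ∀ γrep : Fin (2 ^ s) → π, γrep 0 = 1 →
        Function.Bijective (fun j : Fin (2 ^ s) => ((γrep j : π) : π ⧸ N)) →
        let Θ₀ : {ρ : π → ZMod 2 //
              (∀ a b : π, ρ (a * b) = ρ a + ρ b) ∧ ∀ γ ∈ N, ρ γ = 0} → V :=
          fun ρ => ((2 : ℂ) ^ s)⁻¹ •
            ∑ j : Fin (2 ^ s), ((-1 : ℂ) ^ (ρ.1 (γrep j)).val) • M (γrep j) θ
        θ = ∑ᶠ ρ, Θ₀ ρ ∧
        ∀ ρ, ∀ γ : π,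
          M γ (Θ₀ ρ) - ((-1 : ℂ) ^ (ρ.1 γ).val) • Θ₀ ρ ∈ F (k - 1)) := by
  have : N.FiniteIndex := ⟨by simp [hindex]⟩
  let := Fintype.ofFinite (SignCharacter N)
  have projections (hθ : θ ∈ F k) (γrep : Fin (2 ^ s) → π) (h₀ : γrep 0 = 1)
      (hγ : Bijective fun j => (γrep j : π ⧸ N)) :
      θ = ∑ᶠ ρ : SignCharacter N, ((2 : ℂ) ^ s)⁻¹ • twistedSum M ρ.sign γrep θ ∧
        ∀ (ρ : SignCharacter N) (g : π), M g (((2 : ℂ) ^ s)⁻¹ • twistedSum M ρ.sign γrep θ) -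
          ρ.sign g • ((2 : ℂ) ^ s)⁻¹ • twistedSum M ρ.sign γrep θ ∈ F (k - 1) := by
    refine ⟨?_, fun ρ g => ?_⟩
    · rw [finsum_eq_sum_of_fintype, ← Finset.smul_sum,
        SignCharacter.sum_twistedSum_sign hsq M θ h₀ hγ.1, hindex, smul_smul]
      push_cast
      rw [inv_mul_cancel₀ (pow_ne_zero s two_ne_zero), one_smul]
    · rw [map_smul, smul_comm (ρ.sign g), ← smul_sub]
      refine (F (k - 1)).smul_mem _ (ρ.map_twistedSum_sub_sign_smul_mem M ?_ ?_ hγ g)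
      · exact fun g v hv => map_mem_of_unipotentFiltration hN hFneg hFdef _ g hv
      · exact (hFdef k hk θ).1 hθ
  refine ⟨⟨fun hθ => ?_, ?_⟩, projections⟩
  · obtain ⟨γrep, h₀, hγ⟩ := N.exists_bijective_mk_of_card_eq (by simp [hindex]) (0 : Fin (2 ^ s))
    exact ⟨_, projections hθ γrep h₀ hγ⟩
  · rintro ⟨Θ, rfl, hΘ⟩
    have hmem (ρ : SignCharacter N) : Θ ρ ∈ F k :=
      (hFdef k hk _).2 fun γ hγ => by simpa [ρ.map_of_mem hγ] using hΘ ρ γ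
    rw [finsum_eq_sum_of_fintype]
    exact Submodule.sum_mem _ fun ρ _ => hmem ρ
end

section
/- Let π be a group, ρ : π → ℤ/2ℤ a homomorphism, and μ : π → ℝ a map satisfying the twisted additivity μ(γ₁γ₂) = μ(γ₁) + (−1)^{ρ(γ₁)} μ(γ₂) for all γ₁, γ₂ ∈ π. Suppose there exists an element δ ∈ π with ρ(δ) = 1 and μ(δ) = 0. Then the image of μ is an additive subgroup of ℝ. Moreover, if π is finitely generated, then this subgroup is a finitely generated additive subgroup of ℝ. -/
/-- Let `π` be a group, `ρ : π → ℤ/2` a homomorphism, and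
`μ : π → ℝ` a map satisfying the twisted additivity
`μ (γ₁ * γ₂) = μ γ₁ + (-1)^(ρ γ₁) * μ γ₂`.  Suppose there is `δ ∈ π` with
`ρ δ = 1` and `μ δ = 0`.  Then the image of `μ` is an additive subgroup of `ℝ`;
moreover, if `π` is finitely generated then this subgroup is finitely
generated. -/
theorem twisted_homomorphism_image_subgroup
    {π : Type*} [Group π]
    (ρ : π → ZMod 2) (hρ : ∀ a b : π, ρ (a * b) = ρ a + ρ b)
    (μ : π → ℝ)
    (hμ : ∀ γ₁ γ₂ : π, μ (γ₁ * γ₂) = μ γ₁ + (-1 : ℝ) ^ (ρ γ₁).val * μ γ₂)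
    (δ : π) (hδρ : ρ δ = 1) (hδμ : μ δ = 0) :
    (∃ A : AddSubgroup ℝ, (A : Set ℝ) = Set.range μ) ∧
    (Group.FG π → ∃ A : AddSubgroup ℝ, (A : Set ℝ) = Set.range μ ∧ A.FG) := by
  have hcases : ∀ x : ZMod 2, x = 0 ∨ x = 1 := by decide
  have hv1 : (1 : ZMod 2).val = 1 := rfl
  have hρ1 : ρ 1 = 0 := by
    have h := hρ 1 1
    rw [one_mul] at h
    exact (add_eq_right.mp h.symm)
  have hμ1 : μ 1 = 0 := by
    have h := hμ 1 1
    rw [one_mul, hρ1] at h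
    simp at h
    linarith
  have hneg : ∀ a : π, μ (δ * a) = - μ a := by
    intro a
    have h := hμ δ a
    rw [hδρ, hδμ, hv1] at h
    simpa using h
  have hadd : ∀ a b : π, ∃ c : π, μ c = μ a + μ b := by
    intro a b
    rcases hcases (ρ a) with h | h
    · exact ⟨a * b, by rw [hμ, h]; norm_num⟩
    · refine ⟨a * δ * b, ?_⟩
      have h1 : ρ (a * δ) = 0 := by rw [hρ, h, hδρ]; decide
      have h2 : μ (a * δ) = μ a := by rw [hμ, hδμ, h]; ring
      rw [hμ, h1, h2]; norm_num
  -- the subgroup whose carrier is the range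
  set A₀ : AddSubgroup ℝ :=
    { carrier := Set.range μ
      zero_mem' := ⟨1, hμ1⟩
      add_mem' := by
        rintro x y ⟨a, rfl⟩ ⟨b, rfl⟩
        obtain ⟨c, hc⟩ := hadd a b
        exact ⟨c, hc⟩
      neg_mem' := by
        rintro x ⟨a, rfl⟩
        exact ⟨δ * a, hneg a⟩ } with hA₀
  have hA₀c : (A₀ : Set ℝ) = Set.range μ := rfl
  refine ⟨⟨A₀, rfl⟩, fun hfg => ?_⟩
  obtain ⟨S, hS⟩ := hfg.out
  set A : AddSubgroup ℝ := AddSubgroup.closure (μ '' (S : Set π)) with hA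
  have hsub : (A : Set ℝ) ⊆ Set.range μ := by
    have : A ≤ A₀ := AddSubgroup.closure_le _ |>.2 (by
      rintro x ⟨a, _, rfl⟩; exact ⟨a, rfl⟩)
    exact this
  have hsup : Set.range μ ⊆ (A : Set ℝ) := by
    rintro x ⟨γ, rfl⟩
    have hγ : γ ∈ Subgroup.closure (S : Set π) := hS ▸ Subgroup.mem_top γ
    induction hγ using Subgroup.closure_induction with
    | mem s hs => exact AddSubgroup.subset_closure ⟨s, hs, rfl⟩
    | one => rw [hμ1]; exact A.zero_mem
    | mul a b ha hb iha ihb =>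
        rw [hμ a b]
        rcases hcases (ρ a) with h | h
        · rw [h]; simpa using A.add_mem iha ihb
        · rw [h, hv1]; simpa using A.add_mem iha (A.neg_mem ihb)
    | inv a ha iha =>
        have h := hμ a a⁻¹
        rw [mul_inv_cancel, hμ1] at h
        rcases hcases (ρ a) with hr | hr
        · rw [hr] at h; simp at h
          have : μ a⁻¹ = - μ a := by linarith
          rw [this]; exact A.neg_mem iha
        · rw [hr, hv1] at h; simp at h
          have : μ a⁻¹ = μ a := by linarith
          rw [this]; exact iha
  exact ⟨A, hsub.antisymm hsup, ⟨S.image μ, by simp [hA]⟩⟩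
end

section
/- Let π be a group acting ℂ-linearly on complex vector spaces V and W via operators M_γ, let N ⊆ π be a subgroup, and let {F_k(V)} and {F_k(W)} denote the N-unipotent filtrations of V and W. Let V′ ⊆ V be a subspace invariant under M_γ for all γ ∈ N, and let L : V′ → W be a ℂ-linear map such that for every γ ∈ N and every θ ∈ V′, the element M_γ(Lθ) − L(M_γ θ) belongs to F_0(W). Then L(F_k(V) ∩ V′) ⊆ F_{k+1}(W) for every k ≥ −1. -/
/-- Let `π` act `ℂ`-linearly on complex vector spaces `V` and `W`
via `MV γ` and `MW γ`, let `N ⊆ π` be a subgroup, and let `FV`, `FW` be the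
`N`-unipotent filtrations of `V` and `W` (indexed by `ℤ`, with `F k = ⊥` for
`k ≤ -1`).  Let `V' ⊆ V` be a subspace invariant under `MV γ` for all `γ ∈ N`,
and let `L : V' → W` be `ℂ`-linear such that `MW γ (L θ) - L (MV γ θ) ∈ FW 0`
for all `γ ∈ N` and `θ ∈ V'`.  Then `L` maps `FV k ∩ V'` into `FW (k + 1)` for
every `k ≥ -1`. -/
theorem unipotent_filtration_primitive
    {π : Type*} [Group π] (N : Subgroup π)
    {V W : Type*} [AddCommGroup V] [Module ℂ V] [AddCommGroup W] [Module ℂ W]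
    (MV : π →* (V →ₗ[ℂ] V)) (MW : π →* (W →ₗ[ℂ] W))
    (FV : ℤ → Submodule ℂ V) (FW : ℤ → Submodule ℂ W)
    (hFVneg : ∀ k : ℤ, k ≤ -1 → FV k = ⊥)
    (hFVdef : ∀ k : ℤ, 0 ≤ k → ∀ θ : V, θ ∈ FV k ↔ ∀ γ ∈ N, MV γ θ - θ ∈ FV (k - 1))
    (hFWneg : ∀ k : ℤ, k ≤ -1 → FW k = ⊥)
    (hFWdef : ∀ k : ℤ, 0 ≤ k → ∀ θ : W, θ ∈ FW k ↔ ∀ γ ∈ N, MW γ θ - θ ∈ FW (k - 1))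
    (V' : Submodule ℂ V)
    (hV'inv : ∀ γ ∈ N, ∀ θ ∈ V', MV γ θ ∈ V')
    (L : V' →ₗ[ℂ] W)
    (hcomm : ∀ γ ∈ N, ∀ θ θ' : V', (θ' : V) = MV γ (θ : V) →
      MW γ (L θ) - L θ' ∈ FW 0) :
    ∀ k : ℤ, -1 ≤ k → ∀ θ : V', (θ : V) ∈ FV k → L θ ∈ FW (k + 1) := by
  have hmono : ∀ k : ℤ, -1 ≤ k → FW k ≤ FW (k + 1) := by
    refine Int.le_induction ?_ ?_
    · rw [hFWneg (-1) le_rfl]; exact bot_le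
    · intro n hn ih x hx
      rw [hFWdef (n + 1 + 1) (by omega)]
      intro γ hγ
      have h := (hFWdef (n + 1) (by omega) x).mp hx γ hγ
      rw [show (n : ℤ) + 1 - 1 = n by omega] at h
      have := ih h
      rwa [show (n : ℤ) + 1 + 1 - 1 = n + 1 by omega]
  have hmono' : ∀ j : ℤ, -1 ≤ j → ∀ k : ℤ, j ≤ k → FW j ≤ FW k := by
    intro j hj
    refine Int.le_induction le_rfl ?_
    intro n hn ih
    exact ih.trans (hmono n (by omega))
  refine Int.le_induction ?_ ?_
  · intro θ hθ
    rw [hFVneg (-1) le_rfl] at hθ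
    have : θ = 0 := by ext; simpa using hθ
    simp [this]
  · intro n hn ih θ hθ
    rw [hFWdef (n + 1 + 1) (by omega)]
    intro γ hγ
    set θ' : V' := ⟨MV γ (θ : V), hV'inv γ hγ θ θ.2⟩ with hθ'
    have h1 : MW γ (L θ) - L θ' ∈ FW 0 := hcomm γ hγ θ θ' rfl
    have h2 : (↑(θ' - θ) : V) ∈ FV n := by
      have := (hFVdef (n + 1) (by omega) θ).mp hθ γ hγ
      simpa using this
    have h3 : L (θ' - θ) ∈ FW (n + 1) := ih (θ' - θ) h2
    have h4 : MW γ (L θ) - L θ ∈ FW (n + 1) := by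
      have := Submodule.add_mem _ (hmono' 0 (by omega) (n + 1) (by omega) h1) h3
      simpa [map_sub, sub_add_sub_cancel] using this
    simpa using h4
end

section
/- Let d ≥ 1 and let φ : ℂ^d → ℂ be an entire (everywhere complex-differentiable) function. Suppose there exist polynomials f_1, …, f_N ∈ ℂ[z_1,…,z_d] such that exp(Im φ(z)) ≤ max_{n=1,…,N} |f_n(z)| for all z ∈ ℂ^d (equivalently, Im φ(z) ≤ max_n log |f_n(z)| with the convention log 0 = −∞). Then φ is constant. -/
/-!
Since `‖exp (-I * φ z)‖ = exp (φ z).im`, the function `ψ = exp (-I * φ)` is entire, has no zeros and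
grows at most polynomially. Restricted to a complex line, Cauchy's estimates kill its Taylor
coefficients beyond the growth exponent, so it is a polynomial in one variable without roots,
hence constant; then `φ` has zero derivative along every line.
-/

open Filter Topology Polynomial

theorem Polynomial.eq_C_of_forall_eval_ne_zero {K : Type*} [Field K] [IsAlgClosed K] {p : K[X]}
    (hp : ∀ x, p.eval x ≠ 0) : p = C (p.coeff 0) :=
  eq_C_of_degree_le_zero (not_not.1 fun hdeg ↦
    let ⟨x, hx⟩ := IsAlgClosed.exists_root p hdeg; hp x hx).le

namespace Complex

theorem iteratedDeriv_eq_zero_of_norm_le_mul_one_add_norm_pow {F : Type*} [NormedAddCommGroup F]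
    [NormedSpace ℂ F] [CompleteSpace F] {f : ℂ → F} (hf : Differentiable ℂ f) {C : ℝ} {k n : ℕ}
    (hkn : k < n) (hfC : ∀ z, ‖f z‖ ≤ C * (1 + ‖z‖) ^ k) : iteratedDeriv n f 0 = 0 := by
  have hcauchy (R : ℝ) (hR : 0 < R) :
      ‖iteratedDeriv n f 0‖ ≤ n.factorial * C * ((R + 1) ^ k / R ^ n) :=
    (norm_iteratedDeriv_le_of_forall_mem_sphere_norm_le n hR hf.diffContOnCl
      fun z hz ↦ by simpa [mem_sphere_zero_iff_norm.1 hz, add_comm] using hfC z).trans_eq (by ring)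
  have hlim : Tendsto (fun R : ℝ ↦ (R + 1) ^ k / R ^ n) atTop (𝓝 0) := by
    have := div_tendsto_atTop_zero_of_degree_lt ((X + 1 : ℝ[X]) ^ k) (X ^ n) (by
      rw [degree_pow, ← C_1, degree_X_add_C, degree_X_pow, nsmul_one]; exact_mod_cast hkn)
    simpa using this
  refine norm_le_zero_iff.1 (ge_of_tendsto (by simpa using hlim.const_mul (n.factorial * C)) ?_)
  filter_upwards [eventually_gt_atTop 0] with R hR using hcauchy R hR

theorem exists_polynomial_eq_of_norm_le_mul_one_add_norm_pow {f : ℂ → ℂ} (hf : Differentiable ℂ f)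
    {C : ℝ} {k : ℕ} (hfC : ∀ z, ‖f z‖ ≤ C * (1 + ‖z‖) ^ k) : ∃ p : ℂ[X], ∀ z, f z = p.eval z := by
  refine ⟨∑ n ∈ Finset.range (k + 1),
    Polynomial.C ((n.factorial : ℂ)⁻¹ * iteratedDeriv n f 0) * X ^ n, fun z ↦ ?_⟩
  rw [← taylorSeries_eq_of_entire' 0 z hf, tsum_eq_sum (s := Finset.range (k + 1))]
  · simp [eval_finsetSum]
  · intro n hn
    rw [iteratedDeriv_eq_zero_of_norm_le_mul_one_add_norm_pow hf (by simpa using hn) hfC]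
    simp

theorem exists_const_of_ne_zero_of_norm_le_mul_one_add_norm_pow {f : ℂ → ℂ}
    (hf : Differentiable ℂ f) (hf0 : ∀ z, f z ≠ 0) {C : ℝ} {k : ℕ}
    (hfC : ∀ z, ‖f z‖ ≤ C * (1 + ‖z‖) ^ k) : ∃ c, ∀ z, f z = c := by
  obtain ⟨p, hp⟩ := exists_polynomial_eq_of_norm_le_mul_one_add_norm_pow hf hfC
  refine ⟨p.coeff 0, fun z ↦ ?_⟩
  rw [hp, Polynomial.eq_C_of_forall_eval_ne_zero (p := p) fun x ↦ hp x ▸ hf0 x]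
  simp

theorem apply_eq_apply_of_exp_im_le_mul_one_add_norm_pow {g : ℂ → ℂ} (hg : Differentiable ℂ g)
    {C : ℝ} {k : ℕ} (hgC : ∀ t, Real.exp (g t).im ≤ C * (1 + ‖t‖) ^ k) (s t : ℂ) : g s = g t := by
  set ψ : ℂ → ℂ := fun t ↦ exp (-I * g t)
  have hψ : Differentiable ℂ ψ := (hg.const_mul _).cexp
  have hψC (t : ℂ) : ‖ψ t‖ ≤ C * (1 + ‖t‖) ^ k := by
    simpa [ψ, norm_exp] using hgC t
  obtain ⟨c, hc⟩ :=
    exists_const_of_ne_zero_of_norm_le_mul_one_add_norm_pow hψ (fun _ ↦ exp_ne_zero _) hψC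
  have hderiv (t : ℂ) : deriv g t = 0 := by
    have h := ((hg t).hasDerivAt.const_mul (-I)).cexp.unique
      ((funext hc : ψ = fun _ ↦ c) ▸ hasDerivAt_const t c)
    simpa [exp_ne_zero, I_ne_zero] using h
  exact is_const_of_deriv_eq_zero hg hderiv s t

end Complex

theorem Differentiable.apply_eq_apply_of_exp_im_le_mul_one_add_norm_pow {E : Type*}
    [NormedAddCommGroup E] [NormedSpace ℂ E] {φ : E → ℂ} (hφ : Differentiable ℂ φ) {C : ℝ} {k : ℕ}
    (hφC : ∀ z, Real.exp (φ z).im ≤ C * (1 + ‖z‖) ^ k) (a b : E) : φ a = φ b := by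
  set L : ℂ → E := fun t ↦ a + t • (b - a)
  have hC : 0 ≤ C := by simpa using (Real.exp_pos _).le.trans (hφC 0)
  have hL (t : ℂ) : 1 + ‖L t‖ ≤ (1 + ‖a‖ + ‖b - a‖) * (1 + ‖t‖) := by
    have := norm_add_le a (t • (b - a))
    rw [norm_smul] at this
    nlinarith [norm_nonneg a, norm_nonneg t, norm_nonneg (b - a)]
  have hφL (t : ℂ) :
      Real.exp (φ (L t)).im ≤ C * (1 + ‖a‖ + ‖b - a‖) ^ k * (1 + ‖t‖) ^ k :=
    calc Real.exp (φ (L t)).im ≤ C * (1 + ‖L t‖) ^ k := hφC _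
      _ ≤ C * ((1 + ‖a‖ + ‖b - a‖) * (1 + ‖t‖)) ^ k := by gcongr; exact hL t
      _ = C * (1 + ‖a‖ + ‖b - a‖) ^ k * (1 + ‖t‖) ^ k := by rw [mul_pow, mul_assoc]
  simpa [L] using Complex.apply_eq_apply_of_exp_im_le_mul_one_add_norm_pow
    (hφ.comp (by fun_prop)) hφL 0 1

namespace MvPolynomial

variable {σ 𝕜 : Type*} [Fintype σ] [NormedField 𝕜]

theorem norm_eval_le (p : MvPolynomial σ 𝕜) (z : σ → 𝕜) :
    ‖eval z p‖ ≤ (∑ s ∈ p.support, ‖p.coeff s‖) * (1 + ‖z‖) ^ p.totalDegree := by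
  rw [eval_eq', Finset.sum_mul]
  refine (norm_sum_le _ _).trans (Finset.sum_le_sum fun s hs ↦ ?_)
  rw [norm_mul, norm_prod]
  gcongr
  calc ∏ i, ‖z i ^ s i‖ ≤ ∏ i, (1 + ‖z‖) ^ s i := by
        gcongr with i
        rw [norm_pow]
        gcongr
        exact (norm_le_pi_norm z i).trans (le_add_of_nonneg_left zero_le_one)
    _ = (1 + ‖z‖) ^ ∑ i, s i := Finset.prod_pow_eq_pow_sum _ _ _
    _ ≤ (1 + ‖z‖) ^ p.totalDegree := by
        gcongr
        · exact le_add_of_nonneg_right (norm_nonneg z)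
        · simpa [Finsupp.sum_fintype] using le_totalDegree hs

theorem exists_forall_norm_eval_le {ι : Type*} [Fintype ι] (f : ι → MvPolynomial σ 𝕜) :
    ∃ (C : ℝ) (k : ℕ), ∀ i z, ‖eval z (f i)‖ ≤ C * (1 + ‖z‖) ^ k := by
  refine ⟨∑ i, ∑ s ∈ (f i).support, ‖(f i).coeff s‖, Finset.univ.sup fun i ↦ (f i).totalDegree,
    fun i z ↦ (norm_eval_le (f i) z).trans ?_⟩
  have hcoeff (j : ι) : 0 ≤ ∑ s ∈ (f j).support, ‖(f j).coeff s‖ :=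
    Finset.sum_nonneg fun _ _ ↦ norm_nonneg _
  gcongr
  · exact Finset.single_le_sum (fun j _ ↦ hcoeff j) (Finset.mem_univ i)
  · exact le_add_of_nonneg_right (norm_nonneg z)
  · exact Finset.le_sup (f := fun i ↦ (f i).totalDegree) (Finset.mem_univ i)

end MvPolynomial

theorem entire_with_logarithmically_bounded_imaginary_part_constant_general
    (d : ℕ) (φ : (Fin d → ℂ) → ℂ)
    (hφ : Differentiable ℂ φ)
    (N : ℕ) (f : Fin N → MvPolynomial (Fin d) ℂ)
    (hbound : ∀ z : Fin d → ℂ, ∃ n : Fin N,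
      Real.exp (φ z).im ≤ ‖MvPolynomial.eval z (f n)‖) :
    ∃ c : ℂ, ∀ z, φ z = c := by
  obtain ⟨C, k, hf⟩ := MvPolynomial.exists_forall_norm_eval_le f
  have hφC (z : Fin d → ℂ) : Real.exp (φ z).im ≤ C * (1 + ‖z‖) ^ k :=
    let ⟨n, hn⟩ := hbound z; hn.trans (hf n z)
  exact ⟨φ 0, fun z ↦ hφ.apply_eq_apply_of_exp_im_le_mul_one_add_norm_pow hφC z 0⟩

/-- Let `φ : ℂ^d → ℂ` (with `d ≥ 1`) be an entire function and
suppose there are polynomials `f 1, …, f N` (with `N ≥ 1`) such that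
`exp (Im (φ z)) ≤ max_n |f n z|` for all `z` (the inequality being expressed by
the existence, for each `z`, of some `n` with
`exp (Im (φ z)) ≤ |f n z|`).  Then `φ` is constant. -/
theorem entire_with_logarithmically_bounded_imaginary_part_constant
    (d : ℕ) (hd : 1 ≤ d) (φ : (Fin d → ℂ) → ℂ)
    (hφ : Differentiable ℂ φ)
    (N : ℕ) (hN : 0 < N) (f : Fin N → MvPolynomial (Fin d) ℂ)
    (hbound : ∀ z : Fin d → ℂ, ∃ n : Fin N,
      Real.exp (φ z).im ≤ ‖MvPolynomial.eval z (f n)‖) :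
    ∃ c : ℂ, ∀ z, φ z = c :=
  entire_with_logarithmically_bounded_imaginary_part_constant_general d φ hφ N f hbound
end

section
/- Let n ≥ 1 and let I ⊆ {0,…,n} be a subset with |I| ≥ 2. Then the polynomial C ↦ D_I(C) takes both positive and negative values on 𝒢_(n)(ℝ): there exist matrices C, C′ ∈ 𝒢_(n)(ℝ) with D_I(C) > 0 and D_I(C′) < 0. Consequently, the real hypersurface {C ∈ 𝒢_(n)(ℝ) : D_I(C) = 0} is nonempty and separates 𝒢_(n)(ℝ). -/
/-- The principal minor `D_I(C)` of a matrix `C` on the rows and columns with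
indices in the subset `I ⊆ {0, …, n}`. -/
noncomputable def principalMinor (n : ℕ) (I : Finset (Fin (n + 1)))
    (C : Matrix (Fin (n + 1)) (Fin (n + 1)) ℝ) : ℝ :=
  (C.submatrix (fun i : I => (i : Fin (n + 1))) (fun i : I => (i : Fin (n + 1)))).det

/-- The affine space `𝒢_(n)(ℝ)` of real symmetric `(n+1) × (n+1)` matrices with
units on the diagonal. -/
def symUnitDiag (n : ℕ) : Set (Matrix (Fin (n + 1)) (Fin (n + 1)) ℝ) :=
  {C | C.IsSymm ∧ ∀ j, C j j = 1}

open Matrix in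
/-- Determinant of the identity perturbed by `t` in the symmetric off-diagonal
positions `(a, b)` and `(b, a)`. -/
lemma det_one_add_symm_pair {α : Type*} [DecidableEq α] [Fintype α] (a b : α) (hab : a ≠ b)
    (t : ℝ) :
    (Matrix.of fun x y : α => if x = y then (1:ℝ) else
      if (x = a ∧ y = b) ∨ (x = b ∧ y = a) then t else 0).det = 1 - t ^ 2 := by
  set M : Matrix α α ℝ := Matrix.of fun x y : α => if x = y then (1:ℝ) else
      if (x = a ∧ y = b) ∨ (x = b ∧ y = a) then t else 0 with hM
  have h1 : M.det = (M.updateRow a (M a + (-t) • M b)).det :=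
    (det_updateRow_add_smul_self M hab (-t)).symm
  have hrow : (M a + (-t) • M b) = (1 - t ^ 2) • ((Pi.single a 1 : α → ℝ)) := by
    funext y
    simp only [Pi.add_apply, Pi.smul_apply, smul_eq_mul, hM, of_apply, Pi.single_apply]
    split_ifs <;> subst_vars <;> first | ring1 | exact absurd rfl hab | tauto
  have h2 : (M.updateRow a (M a + (-t) • M b)).det
      = (1 - t ^ 2) * (M.updateRow a ((Pi.single a 1 : α → ℝ))).det := by
    rw [hrow, det_updateRow_smul]
  have hM1 : M.updateRow a ((Pi.single a 1 : α → ℝ))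
      = (1 : Matrix α α ℝ).updateRow b ((1 : Matrix α α ℝ) b + t • (1 : Matrix α α ℝ) a) := by
    funext x y
    simp only [updateRow_apply, hM, of_apply, Pi.add_apply, Pi.smul_apply,
      Matrix.one_apply, smul_eq_mul, Pi.single_apply]
    split_ifs <;> subst_vars <;> first | ring1 | exact absurd rfl hab | tauto
  have h3 : (M.updateRow a ((Pi.single a 1 : α → ℝ))).det = 1 := by
    rw [hM1, det_updateRow_add_smul_self _ hab.symm t, det_one]
  rw [h1, h2, h3, mul_one]

/-- For `n ≥ 1` and `I ⊆ {0,…,n}` with `|I| ≥ 2`, the principal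
minor `D_I` takes both positive and negative values on `𝒢_(n)(ℝ)`.
Consequently the hypersurface `{D_I = 0}` in `𝒢_(n)(ℝ)` is nonempty and
separates `𝒢_(n)(ℝ)`: its complement in `𝒢_(n)(ℝ)` is not preconnected. -/
theorem principal_minor_takes_both_signs
    (n : ℕ) (hn : 1 ≤ n) (I : Finset (Fin (n + 1))) (hI : 2 ≤ I.card) :
    (∃ C ∈ symUnitDiag n, 0 < principalMinor n I C) ∧
    (∃ C ∈ symUnitDiag n, principalMinor n I C < 0) ∧
    (∃ C ∈ symUnitDiag n, principalMinor n I C = 0) ∧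
    ¬ IsPreconnected {C ∈ symUnitDiag n | principalMinor n I C ≠ 0} := by
  obtain ⟨i, hi, j, hj, hij⟩ := Finset.one_lt_card.mp (by omega : 1 < I.card)
  -- the family of matrices
  set C : ℝ → Matrix (Fin (n + 1)) (Fin (n + 1)) ℝ := fun t =>
    Matrix.of fun u v => if u = v then (1:ℝ) else
      if (u = i ∧ v = j) ∨ (u = j ∧ v = i) then t else 0 with hC
  have hmem : ∀ t, C t ∈ symUnitDiag n := by
    intro t
    refine ⟨?_, fun u => by simp [hC]⟩
    ext u v
    simp only [hC, Matrix.transpose_apply, Matrix.of_apply]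
    split_ifs <;> subst_vars <;> first | rfl | tauto
  have hval : ∀ t, principalMinor n I (C t) = 1 - t ^ 2 := by
    intro t
    have : (C t).submatrix (fun i : I => (i : Fin (n + 1))) (fun i : I => (i : Fin (n + 1)))
        = Matrix.of fun x y : I => if x = y then (1:ℝ) else
          if (x = (⟨i, hi⟩ : I) ∧ y = (⟨j, hj⟩ : I)) ∨ (x = (⟨j, hj⟩ : I) ∧ y = (⟨i, hi⟩ : I))
            then t else 0 := by
      funext x y
      simp only [Matrix.submatrix_apply, hC, Matrix.of_apply, Subtype.ext_iff]
    rw [principalMinor, this, det_one_add_symm_pair _ _ (by simp [Subtype.ext_iff, hij]) t]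
  have hpos : 0 < principalMinor n I (C 0) := by rw [hval]; norm_num
  have hneg : principalMinor n I (C 2) < 0 := by rw [hval]; norm_num
  have hzero : principalMinor n I (C 1) = 0 := by rw [hval]; norm_num
  refine ⟨⟨C 0, hmem 0, hpos⟩, ⟨C 2, hmem 2, hneg⟩, ⟨C 1, hmem 1, hzero⟩, ?_⟩
  intro hpc
  have hf : Continuous (principalMinor n I) := by
    unfold principalMinor
    exact (continuous_id.matrix_submatrix _ _).matrix_det
  have hu : IsOpen ((principalMinor n I) ⁻¹' Set.Ioi 0) := isOpen_Ioi.preimage hf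
  have hv : IsOpen ((principalMinor n I) ⁻¹' Set.Iio 0) := isOpen_Iio.preimage hf
  obtain ⟨D, ⟨-, -⟩, hD1, hD2⟩ := hpc _ _ hu hv
    (fun D hD => by
      rcases lt_or_gt_of_ne hD.2 with h | h
      · exact Or.inr h
      · exact Or.inl h)
    ⟨C 0, ⟨hmem 0, ne_of_gt hpos⟩, hpos⟩
    ⟨C 2, ⟨hmem 2, ne_of_lt hneg⟩, hneg⟩
  have h1 : (0:ℝ) < principalMinor n I D := hD1
  have h2 : principalMinor n I D < 0 := hD2
  linarith
end

section
/- Let n ≥ 2. There exists a matrix C⁰ = (c⁰_{jk}) ∈ 𝒢_(n)(ℝ) such that: (i) D(C⁰) = det C⁰ = 0; (ii) c⁰_{jk} > 1 for all j ≠ k; (iii) (−1)^{|I|} D_I(C⁰) < 0 for every subset I ⊆ {0,…,n} with 2 ≤ |I| ≤ n; (iv) the mixed minor D_{{0,2,…,n},{1,2,…,n}}(C⁰) (rows {0,2,…,n}, columns {1,2,…,n}) is nonzero, so that the differential of the determinant at C⁰ is nonzero and C⁰ is a regular point of the hypersurface {det = 0}. Moreover, C⁰ lies in the boundary of the set 𝒞_{Λ^n}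 = {C ∈ 𝒢_(n)(ℝ) : c_{jk} > 1 for all j ≠ k and (−1)^{|I|} D_I(C) < 0 for all I with 2 ≤ |I| ≤ n+1}. (Such C⁰ is obtained as the Gram matrix, with respect to the Minkowski form, of n+1 points on the upper hyperboloid lying in a common hyperplane so that every n of them are linearly independent.) -/
/-- The mixed minor `D_{{0,2,…,n},{1,2,…,n}}(C)`: rows `{0,2,…,n}`, columns
`{1,2,…,n}` (each taken in increasing order). -/
noncomputable def mixedMinor (n : ℕ) (C : Matrix (Fin (n + 1)) (Fin (n + 1)) ℝ) : ℝ :=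
  (C.submatrix
    (fun i : Fin n => if i.val = 0 then (0 : Fin (n + 1)) else i.succ)
    (fun i : Fin n => (i : Fin n).succ)).det

/-- The set `𝒞_{Λ^n}` of Gram matrices of vertices of non-degenerate bounded
simplices in the Lobachevsky space `Λ^n`: real symmetric matrices with unit
diagonal, `c_{jk} > 1` off the diagonal and `(-1)^{|I|} D_I(C) < 0` for every
`I` with `|I| ≥ 2`. -/
def lobachevskyGram (n : ℕ) : Set (Matrix (Fin (n + 1)) (Fin (n + 1)) ℝ) :=
  {C | C.IsSymm ∧ (∀ j, C j j = 1) ∧ (∀ j k, j ≠ k → 1 < C j k) ∧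
    ∀ I : Finset (Fin (n + 1)), 2 ≤ I.card →
      (-1 : ℝ) ^ I.card * principalMinor n I C < 0}

/-!
Lift the `n + 1` points `0, e₁, …, e_{n-1}, (½, …, ½)` of `ℝⁿ⁻¹` to the upper sheet of the
hyperboloid `⟪x, x⟫ = 1` of Minkowski space `ℝ^{1,n-1}`, and let `C⁰` be their Gram matrix.
It is singular, since these are `n + 1` vectors in an `n`-dimensional space, but the only linear
relation among them has no zero coefficient, so any `n` of them are linearly independent.

For linearly independent unit timelike vectors `v₀, …, v_{k-1}`, subtracting from each `vᵢ` its
component along `v₀` replaces the Gram matrix by `1 ⊕ N`, where `N` is the Gram matrix of vectors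
orthogonal to the timelike `v₀`, hence negative definite; so `(-1)ᵏ det < 0`. This gives the sign
conditions, and the mixed minor factors as `det X · det J · det Y` with `X`, `Y` square matrices
with independent rows. Tilting the last point out of `ℝ^{1,n-1} ⊂ ℝ^{1,n}` by `ε ≠ 0` makes all
`n + 1` lifts independent, so their Gram matrices lie in `𝒞_{Λ^n}`, and they tend to `C⁰`.
-/

open Matrix

lemma Matrix.det_eq_det_succ_sub_mul_of_apply_zero_zero_eq_one {R : Type*} [CommRing R] {k : ℕ}
    (A : Matrix (Fin (k + 1)) (Fin (k + 1)) R) (h : A 0 0 = 1) :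
    A.det = (Matrix.of fun i j : Fin k => A i.succ j.succ - A i.succ 0 * A 0 j.succ).det := by
  let A' : Matrix (Fin (k + 1)) (Fin (k + 1)) R :=
    Matrix.of fun i j => if i = 0 then A 0 j else A i j - A i 0 * A 0 j
  have hA : A.det = A'.det :=
    det_eq_of_forall_row_eq_smul_add_const (fun i => if i = 0 then 0 else A i 0) 0 (by simp)
      fun i j => by by_cases hi : i = 0 <;> simp [A', hi]
  rw [hA, det_succ_column_zero, Fin.sum_univ_succ]
  simp only [of_apply, Fin.succAbove_zero, Fin.succ_ne_zero, ↓reduceIte, h, mul_one, sub_self,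
    mul_zero, zero_mul, Finset.sum_const_zero, add_zero, pow_zero, one_mul, A', Fin.val_zero]
  rfl

lemma Matrix.det_of_toBilin'_ne_zero {K m : Type*} [Field K] [Fintype m] [DecidableEq m]
    {J : Matrix m m K} (hJ : J.det ≠ 0) {x y : m → m → K} (hx : LinearIndependent K x)
    (hy : LinearIndependent K y) : (Matrix.of fun i j => J.toBilin' (x i) (y j)).det ≠ 0 := by
  have hxy : (Matrix.of fun i j => J.toBilin' (x i) (y j)) = Matrix.of x * J * (Matrix.of y)ᵀ := by
    ext i j
    simp only [toBilin'_apply', of_apply, mul_apply, transpose_apply, dotProduct, mulVec,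
      Finset.mul_sum, Finset.sum_mul, mul_assoc]
    exact Finset.sum_comm
  have hdet : ∀ {z : m → m → K}, LinearIndependent K z → (Matrix.of z).det ≠ 0 := fun hz =>
    ((isUnit_iff_isUnit_det _).mp (linearIndependent_rows_iff_isUnit.mp hz)).ne_zero
  rw [hxy, det_mul, det_mul, det_transpose]
  exact mul_ne_zero (mul_ne_zero (hdet hx) hJ) (hdet hy)

lemma linearIndepOn_compl_singleton_of_eq_smul {K ι M : Type*} [Field K] [Fintype ι]
    [AddCommGroup M] [Module K M] {v : ι → M} {r : ι → K} (hr : ∀ i, r i ≠ 0)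
    (hv : ∀ y : ι → K, ∑ i, y i • v i = 0 → ∃ c : K, y = c • r) (k : ι) :
    LinearIndepOn K v {k}ᶜ := by
  classical
  rw [linearIndepOn_iff']
  intro t g ht hg i hi
  obtain ⟨c, hc⟩ := hv (fun j => if j ∈ t then g j else 0) (by
    simpa [ite_smul, Finset.sum_ite_mem] using hg)
  have hk : k ∉ t := fun hk => ht hk rfl
  have hc0 : c = 0 := by
    simpa [hk, hr k] using (congrFun hc k).symm
  simpa [hi, hc0] using congrFun hc i

lemma Fin.sum_univ_succ_castSucc {M : Type*} [AddCommMonoid M] {d : ℕ} (f : Fin (d + 2) → M) :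
    ∑ j, f j = f 0 + ∑ c : Fin d, f c.castSucc.succ + f (Fin.last _) := by
  rw [Fin.sum_univ_succ, Fin.sum_univ_castSucc, ← add_assoc]
  rfl

namespace LinearMap.BilinForm

def gram {R M ι : Type*} [CommSemiring R] [AddCommMonoid M] [Module R M]
    (B : LinearMap.BilinForm R M) (v : ι → M) : Matrix ι ι R :=
  Matrix.of fun i j => B (v i) (v j)

section CommRing

variable {R M ι : Type*} [CommRing R] [AddCommGroup M] [Module R M]
  {B : LinearMap.BilinForm R M}

@[simp]
lemma gram_apply (v : ι → M) (i j : ι) : B.gram v i j = B (v i) (v j) := rfl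

lemma submatrix_gram {κ : Type*} (v : ι → M) (f : κ → ι) :
    (B.gram v).submatrix f f = B.gram (v ∘ f) := rfl

lemma transpose_gram (hB : B.IsSymm) (v : ι → M) : (B.gram v)ᵀ = B.gram v := by
  ext i j
  exact hB.eq (v j) (v i)

lemma dotProduct_gram_mulVec [Fintype ι] (v : ι → M) (x y : ι → R) :
    x ⬝ᵥ B.gram v *ᵥ y = B (∑ i, x i • v i) (∑ j, y j • v j) := by
  simp only [dotProduct, mulVec, gram_apply, map_sum, map_smul, LinearMap.coe_sum,
    Finset.sum_apply, LinearMap.smul_apply, smul_eq_mul, Finset.mul_sum]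
  rw [Finset.sum_comm]
  exact Finset.sum_congr rfl fun i _ => Finset.sum_congr rfl fun j _ => by ring

lemma det_gram_eq_det_gram_sub_smul_zero (hB : B.IsSymm) {k : ℕ} (v : Fin (k + 1) → M)
    (h : B (v 0) (v 0) = 1) :
    (B.gram v).det = (B.gram fun i : Fin k => v i.succ - B (v 0) (v i.succ) • v 0).det := by
  rw [det_eq_det_succ_sub_mul_of_apply_zero_zero_eq_one _ h]
  congr 1
  ext i j
  simp only [of_apply, gram_apply, map_sub, map_smul, LinearMap.sub_apply,
    LinearMap.smul_apply, smul_eq_mul, h, hB.eq (v i.succ) (v 0)]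
  ring

end CommRing

section Field

variable {K M ι : Type*} [Field K] [AddCommGroup M] [Module K M] {B : LinearMap.BilinForm K M}
  [Fintype ι] [DecidableEq ι]

lemma det_gram_eq_zero_of_not_linearIndependent {v : ι → M} (hv : ¬LinearIndependent K v) :
    (B.gram v).det = 0 := by
  obtain ⟨y, hy, i, hi⟩ := Fintype.not_linearIndependent_iff.mp hv
  refine Matrix.exists_mulVec_eq_zero_iff.mp ⟨y, fun h => hi (by simp [h]), ?_⟩
  ext j
  simpa [mulVec, dotProduct, map_sum, mul_comm] using congrArg (B (v j)) hy

lemma det_gram_eq_zero_of_finrank_lt [Module.Finite K M] (v : ι → M)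
    (h : Module.finrank K M < Fintype.card ι) : (B.gram v).det = 0 :=
  det_gram_eq_zero_of_not_linearIndependent fun hv => h.not_ge hv.fintype_card_le_finrank

end Field

section Real

variable {M ι : Type*} [AddCommGroup M] [Module ℝ M] {B : LinearMap.BilinForm ℝ M}

lemma neg_one_pow_mul_det_gram_pos {k : ℕ} (hB : B.IsSymm)
    (hneg : ∀ w x, B w w = 1 → B w x = 0 → x ≠ 0 → B x x < 0) {v : Fin (k + 1) → M}
    (hv : LinearIndependent ℝ v) (h : B (v 0) (v 0) = 1) :
    0 < (-1) ^ k * (B.gram v).det := by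
  set z : Fin k → M := fun i => v i.succ - B (v 0) (v i.succ) • v 0
  have hz : (-B.gram z).PosDef := by
    refine PosDef.of_dotProduct_mulVec_pos ?_ fun x hx => ?_
    · rw [IsHermitian, conjTranspose_neg, conjTranspose_eq_transpose_of_trivial,
        transpose_gram hB]
    have horth : B (v 0) (∑ i, x i • z i) = 0 := by
      simp [z, map_sum, h]
    have hne : ∑ i, x i • z i ≠ 0 := by
      intro h0
      apply hx
      have hrel : ∑ j, (Fin.cons (-∑ i, x i * B (v 0) (v i.succ)) x : Fin (k + 1) → ℝ) j • v j
          = 0 := by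
        rw [← h0, Fin.sum_univ_succ]
        simp only [Fin.cons_zero, Fin.cons_succ, neg_smul, Finset.sum_smul, smul_sub, smul_smul,
          Finset.sum_sub_distrib, z]
        abel
      funext i
      simpa using Fintype.linearIndependent_iff.mp hv _ hrel i.succ
    rw [star_trivial, neg_mulVec, dotProduct_neg, dotProduct_gram_mulVec, neg_pos]
    exact hneg _ _ h horth hne
  have := hz.det_pos
  rwa [det_neg, Fintype.card_fin, ← det_gram_eq_det_gram_sub_smul_zero hB v h] at this

theorem neg_one_pow_card_mul_det_gram_neg [Fintype ι] [DecidableEq ι] [Nonempty ι]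
    (hB : B.IsSymm) (hneg : ∀ w x, B w w = 1 → B w x = 0 → x ≠ 0 → B x x < 0) {v : ι → M}
    (hv : LinearIndependent ℝ v) (hunit : ∀ i, B (v i) (v i) = 1) :
    (-1) ^ Fintype.card ι * (B.gram v).det < 0 := by
  obtain ⟨k, hk⟩ := Nat.exists_eq_succ_of_ne_zero (Fintype.card_ne_zero (α := ι))
  let e := (Fintype.equivFin ι).trans (finCongr hk)
  have hpos := neg_one_pow_mul_det_gram_pos hB hneg (hv.comp _ e.symm.injective)
    (hunit (e.symm 0))
  rw [← submatrix_gram, det_submatrix_equiv_self] at hpos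
  rw [hk, pow_succ]
  linarith

end Real

end LinearMap.BilinForm

def minkowskiMatrix (d : ℕ) : Matrix (Fin (d + 1)) (Fin (d + 1)) ℝ :=
  Matrix.diagonal (Fin.cons 1 fun _ => -1)

def minkowski (d : ℕ) : LinearMap.BilinForm ℝ (Fin (d + 1) → ℝ) :=
  (minkowskiMatrix d).toBilin'

noncomputable def hyperboloidLift {d : ℕ} (σ : Fin d → ℝ) : Fin (d + 1) → ℝ :=
  Fin.cons √(1 + ∑ i, σ i ^ 2) σ

section Minkowski

variable {d : ℕ}

lemma minkowski_apply (x y : Fin (d + 1) → ℝ) :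
    minkowski d x y = x 0 * y 0 - ∑ i : Fin d, x i.succ * y i.succ := by
  simp only [minkowski, minkowskiMatrix, toBilin'_apply', dotProduct, mulVec_diagonal,
    Fin.sum_univ_succ, Fin.cons_zero, Fin.cons_succ, one_mul, neg_mul, mul_neg,
    Finset.sum_neg_distrib]
  ring

lemma minkowski_isSymm : (minkowski d).IsSymm :=
  ⟨fun x y => by simp only [minkowski_apply, mul_comm]⟩

lemma det_minkowskiMatrix_ne_zero : (minkowskiMatrix d).det ≠ 0 := by
  simp [minkowskiMatrix, Fin.prod_univ_succ]

lemma minkowski_self_neg_of_orthogonal {w x : Fin (d + 1) → ℝ} (hw : minkowski d w w = 1)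
    (hwx : minkowski d w x = 0) (hx : x ≠ 0) : minkowski d x x < 0 := by
  simp only [minkowski_apply, ← sq] at *
  have hcs := Finset.sum_mul_sq_le_sq_mul_sq Finset.univ (fun i : Fin d => w i.succ)
    fun i => x i.succ
  have hW : 0 ≤ ∑ i : Fin d, w i.succ ^ 2 := by positivity
  by_contra! hle
  have hP : ∑ i : Fin d, w i.succ * x i.succ = w 0 * x 0 := by linarith
  rw [hP] at hcs
  have hx0 : x 0 = 0 := by
    have := mul_le_mul_of_nonneg_left (show ∑ i : Fin d, x i.succ ^ 2 ≤ x 0 ^ 2 by linarith) hW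
    exact pow_eq_zero_iff two_ne_zero |>.mp (by nlinarith)
  have hxs : ∀ i : Fin d, x i.succ = 0 := by
    have : ∑ i : Fin d, x i.succ ^ 2 = 0 := by
      have : 0 ≤ ∑ i : Fin d, x i.succ ^ 2 := by positivity
      rw [hx0] at hle
      linarith
    simpa [Finset.sum_eq_zero_iff_of_nonneg, sq_nonneg] using this
  exact hx (funext (Fin.cases hx0 hxs))

lemma minkowski_hyperboloidLift (σ τ : Fin d → ℝ) :
    minkowski d (hyperboloidLift σ) (hyperboloidLift τ) =
      √(1 + ∑ i, σ i ^ 2) * √(1 + ∑ i, τ i ^ 2) - ∑ i, σ i * τ i := by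
  simp [minkowski_apply, hyperboloidLift]

lemma minkowski_hyperboloidLift_self (σ : Fin d → ℝ) :
    minkowski d (hyperboloidLift σ) (hyperboloidLift σ) = 1 := by
  rw [minkowski_hyperboloidLift, Real.mul_self_sqrt (by positivity)]
  simp [sq]

lemma one_lt_minkowski_hyperboloidLift {σ τ : Fin d → ℝ} (h : σ ≠ τ) :
    1 < minkowski d (hyperboloidLift σ) (hyperboloidLift τ) := by
  rw [minkowski_hyperboloidLift, ← Real.sqrt_mul (by positivity), lt_sub_iff_add_lt']
  refine Real.lt_sqrt_of_sq_lt ?_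
  have hcs := Finset.sum_mul_sq_le_sq_mul_sq Finset.univ σ τ
  obtain ⟨i, hi⟩ := Function.ne_iff.mp h
  have hdist : 0 < ∑ i, (σ i - τ i) ^ 2 :=
    Finset.sum_pos' (fun j _ => sq_nonneg _) ⟨i, Finset.mem_univ i, by
      have := sub_ne_zero.mpr hi; positivity⟩
  simp only [sub_sq, Finset.sum_add_distrib, Finset.sum_sub_distrib, mul_assoc,
    ← Finset.mul_sum] at hdist
  nlinarith [Finset.sum_nonneg fun j (_ : j ∈ Finset.univ) => sq_nonneg (σ j),
    Finset.sum_nonneg fun j (_ : j ∈ Finset.univ) => sq_nonneg (τ j)]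

lemma minkowski_hyperboloidLift_snoc_zero (σ τ : Fin d → ℝ) :
    minkowski (d + 1) (hyperboloidLift (Fin.snoc σ 0)) (hyperboloidLift (Fin.snoc τ 0)) =
      minkowski d (hyperboloidLift σ) (hyperboloidLift τ) := by
  simp [minkowski_hyperboloidLift, Fin.sum_univ_castSucc]

end Minkowski

lemma principalMinor_gram {n : ℕ} {M : Type*} [AddCommGroup M] [Module ℝ M]
    (B : LinearMap.BilinForm ℝ M) (v : Fin (n + 1) → M) (I : Finset (Fin (n + 1))) :
    principalMinor n I (B.gram v) = (B.gram fun i : I => v i).det := rfl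

lemma neg_one_pow_card_mul_principalMinor_gram_hyperboloidLift_neg {n d : ℕ}
    {σ : Fin (n + 1) → Fin d → ℝ} {I : Finset (Fin (n + 1))} (hI : I.Nonempty)
    (hσ : LinearIndepOn ℝ (fun j => hyperboloidLift (σ j)) I) :
    (-1) ^ I.card * principalMinor n I ((minkowski d).gram fun j => hyperboloidLift (σ j)) < 0 := by
  have : Nonempty I := hI.to_subtype
  simpa [principalMinor_gram] using LinearMap.BilinForm.neg_one_pow_card_mul_det_gram_neg
    minkowski_isSymm (fun _ _ => minkowski_self_neg_of_orthogonal) hσ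
    fun _ => minkowski_hyperboloidLift_self _

lemma gram_hyperboloidLift_mem_lobachevskyGram {n : ℕ} {σ : Fin (n + 1) → Fin n → ℝ}
    (hσ : LinearIndependent ℝ fun j => hyperboloidLift (σ j)) :
    (minkowski n).gram (fun j => hyperboloidLift (σ j)) ∈ lobachevskyGram n := by
  refine ⟨LinearMap.BilinForm.transpose_gram minkowski_isSymm _,
    fun j => minkowski_hyperboloidLift_self _, fun j k hjk => ?_, fun I hI => ?_⟩
  · exact one_lt_minkowski_hyperboloidLift fun h => hjk (hσ.injective (by simp [h]))
  · exact neg_one_pow_card_mul_principalMinor_gram_hyperboloidLift_neg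
      (Finset.card_pos.mp (by omega)) (hσ.comp _ Subtype.val_injective)

noncomputable def flatConfig (d : ℕ) : Fin (d + 2) → Fin d → ℝ :=
  Fin.snoc (Fin.cons 0 fun c => Pi.single c 1) fun _ => 1 / 2

noncomputable def tiltedConfig (d : ℕ) (ε : ℝ) : Fin (d + 2) → Fin (d + 1) → ℝ :=
  fun j => Fin.snoc (flatConfig d j) (if j = Fin.last (d + 1) then ε else 0)

noncomputable def flatRelation (d : ℕ) : Fin (d + 2) → ℝ :=
  Fin.snoc (Fin.cons (√2 * d / 2 - √(1 + d / 4)) fun _ => -1 / 2) 1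

noncomputable def flatGram (d : ℕ) : Matrix (Fin (d + 2)) (Fin (d + 2)) ℝ :=
  (minkowski d).gram fun j => hyperboloidLift (flatConfig d j)

section Configuration

variable {d : ℕ}

@[simp]
lemma flatConfig_zero : flatConfig d 0 = 0 := by
  simp [flatConfig]

@[simp]
lemma flatConfig_castSucc_succ (c : Fin d) : flatConfig d c.castSucc.succ = Pi.single c 1 := by
  rw [Fin.succ_castSucc, flatConfig, Fin.snoc_castSucc, Fin.cons_succ]

@[simp]
lemma flatConfig_last : flatConfig d (Fin.last _) = fun _ => 1 / 2 := by
  simp [flatConfig]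

@[simp]
lemma tiltedConfig_apply_castSucc (ε : ℝ) (j : Fin (d + 2)) (c : Fin d) :
    tiltedConfig d ε j c.castSucc = flatConfig d j c := by
  simp [tiltedConfig]

@[simp]
lemma tiltedConfig_apply_last (ε : ℝ) (j : Fin (d + 2)) :
    tiltedConfig d ε j (Fin.last d) = if j = Fin.last _ then ε else 0 := by
  simp [tiltedConfig]

@[simp]
lemma flatRelation_zero : flatRelation d 0 = √2 * d / 2 - √(1 + d / 4) := by
  simp [flatRelation]

@[simp]
lemma flatRelation_castSucc_succ (c : Fin d) : flatRelation d c.castSucc.succ = -1 / 2 := by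
  rw [Fin.succ_castSucc, flatRelation, Fin.snoc_castSucc, Fin.cons_succ]

@[simp]
lemma flatRelation_last : flatRelation d (Fin.last _) = 1 := by
  simp [flatRelation]

lemma sum_smul_hyperboloidLift_flatConfig_apply_succ (y : Fin (d + 2) → ℝ) (c : Fin d) :
    (∑ j, y j • hyperboloidLift (flatConfig d j)) c.succ =
      y c.castSucc.succ + y (Fin.last _) / 2 := by
  simp only [hyperboloidLift, Finset.sum_apply, Pi.smul_apply, Fin.cons_succ, smul_eq_mul,
    Fin.sum_univ_succ_castSucc, flatConfig_zero, Pi.zero_apply, mul_zero, flatConfig_castSucc_succ,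
    Pi.single_apply, mul_ite, mul_one, Finset.sum_ite_eq, Finset.mem_univ, ↓reduceIte, zero_add,
    flatConfig_last]
  ring

lemma sum_smul_hyperboloidLift_flatConfig_apply_zero (y : Fin (d + 2) → ℝ) :
    (∑ j, y j • hyperboloidLift (flatConfig d j)) 0 =
      y 0 + √2 * ∑ c : Fin d, y c.castSucc.succ + √(1 + d / 4) * y (Fin.last _) := by
  simp only [hyperboloidLift, Finset.sum_apply, Pi.smul_apply, Fin.cons_zero, smul_eq_mul,
    Fin.sum_univ_succ_castSucc, flatConfig_zero, Pi.zero_apply, ne_eq, OfNat.ofNat_ne_zero,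
    not_false_eq_true, zero_pow, Finset.sum_const_zero, add_zero, Real.sqrt_one, mul_one,
    flatConfig_castSucc_succ, Pi.single_apply, ite_pow, one_pow, Finset.sum_ite_eq',
    Finset.mem_univ, ↓reduceIte, ← Finset.sum_mul, flatConfig_last, Finset.sum_const,
    Finset.card_univ, Fintype.card_fin, nsmul_eq_mul]
  ring_nf

lemma eq_smul_flatRelation_of_sum_eq_zero {y : Fin (d + 2) → ℝ}
    (h : ∑ j, y j • hyperboloidLift (flatConfig d j) = 0) :
    y = y (Fin.last _) • flatRelation d := by
  have hmid : ∀ c : Fin d, y c.castSucc.succ = -1 / 2 * y (Fin.last _) := fun c => by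
    have := sum_smul_hyperboloidLift_flatConfig_apply_succ y c
    rw [h, Pi.zero_apply] at this
    linarith
  have h0 := sum_smul_hyperboloidLift_flatConfig_apply_zero y
  rw [h, Finset.sum_congr rfl fun c _ => hmid c] at h0
  simp only [Pi.zero_apply, Finset.sum_const, Finset.card_univ, Fintype.card_fin,
    nsmul_eq_mul] at h0
  funext j
  induction j using Fin.lastCases with
  | last => simp
  | cast j =>
    induction j using Fin.cases with
    | zero =>
      simp only [Fin.castSucc_zero, Pi.smul_apply, flatRelation_zero, smul_eq_mul]
      linarith
    | succ c =>
      simp only [Fin.castSucc_succ, hmid, Pi.smul_apply, flatRelation_castSucc_succ, smul_eq_mul]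
      ring

lemma sqrt_two_mul_div_two_ne_sqrt (d : ℕ) : √2 * d / 2 ≠ √(1 + d / 4) := by
  intro h
  have hsq := congrArg (· ^ 2) h
  simp only [div_pow, mul_pow, Real.sq_sqrt (show (0 : ℝ) ≤ 2 by norm_num),
    Real.sq_sqrt (show (0 : ℝ) ≤ 1 + d / 4 by positivity)] at hsq
  have : 2 * d ^ 2 = d + 4 := by exact_mod_cast (by linarith : (2 * d ^ 2 : ℝ) = d + 4)
  have : d ≤ 2 := by nlinarith
  interval_cases d <;> omega

lemma flatRelation_ne_zero (j : Fin (d + 2)) : flatRelation d j ≠ 0 := by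
  induction j using Fin.lastCases with
  | last => simp
  | cast j =>
    induction j using Fin.cases with
    | zero => simpa [sub_eq_zero] using sqrt_two_mul_div_two_ne_sqrt d
    | succ c => simp

lemma linearIndepOn_hyperboloidLift_flatConfig (k : Fin (d + 2)) :
    LinearIndepOn ℝ (fun j => hyperboloidLift (flatConfig d j)) {k}ᶜ :=
  linearIndepOn_compl_singleton_of_eq_smul flatRelation_ne_zero
    (fun _ hy => ⟨_, eq_smul_flatRelation_of_sum_eq_zero hy⟩) k

lemma flatConfig_injective (hd : 1 ≤ d) : Function.Injective (flatConfig d) := by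
  intro i j hij
  by_contra hne
  obtain ⟨k, hki, hkj⟩ := Finset.exists_mem_ne (s := Finset.univ.erase i)
    (by rw [Finset.card_erase_of_mem (Finset.mem_univ i), Finset.card_univ, Fintype.card_fin]
        omega) j
  exact hne ((linearIndepOn_hyperboloidLift_flatConfig k).injOn
    (Ne.symm (Finset.ne_of_mem_erase hki)) (Ne.symm hkj) (by simp [hij]))

lemma gram_tiltedConfig_zero :
    (minkowski (d + 1)).gram (fun j => hyperboloidLift (tiltedConfig d 0 j)) =
      (minkowski d).gram fun j => hyperboloidLift (flatConfig d j) := by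
  ext i j
  simp [tiltedConfig, minkowski_hyperboloidLift_snoc_zero]

lemma linearIndependent_tiltedConfig {ε : ℝ} (hε : ε ≠ 0) :
    LinearIndependent ℝ fun j => hyperboloidLift (tiltedConfig d ε j) := by
  rw [Fintype.linearIndependent_iff]
  intro y hy
  have hlast : y (Fin.last _) = 0 := by
    simpa [Finset.sum_apply, hyperboloidLift, hε] using congrFun hy (Fin.last d).succ
  have hmid : ∀ c : Fin d, y c.castSucc.succ = 0 := fun c => by
    simpa [Finset.sum_apply, hyperboloidLift, Fin.sum_univ_succ_castSucc, Pi.single_apply, hlast]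
      using congrFun hy c.castSucc.succ
  have h0 : y 0 = 0 := by
    have := congrFun hy 0
    simp only [hyperboloidLift, Finset.sum_apply, Pi.smul_apply, Fin.cons_zero, smul_eq_mul,
      Fin.sum_univ_succ_castSucc, hmid, zero_mul, Finset.sum_const_zero, add_zero, hlast,
      Pi.zero_apply, mul_eq_zero] at this
    exact this.resolve_right (Real.sqrt_pos.2 (by positivity)).ne'
  intro j
  induction j using Fin.lastCases with
  | last => exact hlast
  | cast j =>
    induction j using Fin.cases with
    | zero => exact h0
    | succ c => exact hmid c

lemma continuous_tiltedConfig_apply (j : Fin (d + 2)) (c : Fin (d + 1)) :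
    Continuous fun ε => tiltedConfig d ε j c := by
  induction c using Fin.lastCases with
  | last => simp only [tiltedConfig_apply_last]; split_ifs <;> fun_prop
  | cast c => simp only [tiltedConfig_apply_castSucc]; fun_prop

lemma continuous_gram_tiltedConfig :
    Continuous fun ε => (minkowski (d + 1)).gram fun j => hyperboloidLift (tiltedConfig d ε j) := by
  refine continuous_pi fun i => continuous_pi fun j => ?_
  have := continuous_tiltedConfig_apply (d := d)
  simp only [LinearMap.BilinForm.gram_apply, minkowski_hyperboloidLift]
  fun_prop

lemma flatGram_mem_closure : flatGram d ∈ closure (lobachevskyGram (d + 1)) := by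
  rw [flatGram, ← gram_tiltedConfig_zero]
  refine mem_closure_of_tendsto ((continuous_gram_tiltedConfig.tendsto 0).mono_left
    nhdsWithin_le_nhds) (eventually_nhdsWithin_of_forall fun ε (hε : ε ∈ ({0}ᶜ : Set ℝ)) => ?_)
  exact gram_hyperboloidLift_mem_lobachevskyGram (linearIndependent_tiltedConfig hε)

lemma det_flatGram : (flatGram d).det = 0 :=
  LinearMap.BilinForm.det_gram_eq_zero_of_finrank_lt _ (by simp)

lemma flatGram_not_mem_lobachevskyGram : flatGram d ∉ lobachevskyGram (d + 1) := fun h => by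
  have := h.2.2.2 Finset.univ (by simp)
  rw [flatGram, principalMinor_gram, LinearMap.BilinForm.det_gram_eq_zero_of_finrank_lt _ (by simp)]
    at this
  simp at this

lemma neg_one_pow_card_mul_principalMinor_flatGram_neg {I : Finset (Fin (d + 2))}
    (hI : I.Nonempty) (hI' : I ≠ Finset.univ) :
    (-1) ^ I.card * principalMinor (d + 1) I (flatGram d) < 0 := by
  obtain ⟨k, hk⟩ : ∃ k, k ∉ I := by simpa [Finset.eq_univ_iff_forall] using hI'
  exact neg_one_pow_card_mul_principalMinor_gram_hyperboloidLift_neg hI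
    ((linearIndepOn_hyperboloidLift_flatConfig k).mono fun i hi (h : i = k) => hk (h ▸ hi))

lemma mixedMinor_flatGram_ne_zero : mixedMinor (d + 1) (flatGram d) ≠ 0 := by
  have hindep : ∀ {f : Fin (d + 1) → Fin (d + 2)} {k : Fin (d + 2)}, Function.Injective f →
      (∀ i, f i ≠ k) → LinearIndependent ℝ fun i => hyperboloidLift (flatConfig d (f i)) :=
    fun hf hk => (linearIndepOn_range_iff hf _).mp
      ((linearIndepOn_hyperboloidLift_flatConfig _).mono (Set.range_subset_iff.mpr hk))
  refine det_of_toBilin'_ne_zero det_minkowskiMatrix_ne_zero (hindep (k := 1) ?_ ?_)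
    (hindep (k := 0) (Fin.succ_injective _) Fin.succ_ne_zero)
  · intro a b h
    dsimp only at h
    split_ifs at h with ha hb hb
    · exact Fin.ext (ha.trans hb.symm)
    · exact absurd h.symm (Fin.succ_ne_zero b)
    · exact absurd h (Fin.succ_ne_zero a)
    · exact Fin.succ_injective _ h
  · intro i
    split_ifs with hi
    · exact Fin.zero_ne_one
    · rw [← Fin.succ_zero_eq_one, Ne, Fin.succ_inj, Fin.ext_iff]
      exact hi

end Configuration

/-- For `n ≥ 2` there exists a real symmetric matrix `C⁰` with
unit diagonal such that: (i) `det C⁰ = 0`; (ii) `c⁰_{jk} > 1` for `j ≠ k`;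
(iii) `(-1)^{|I|} D_I(C⁰) < 0` for every `I` with `2 ≤ |I| ≤ n`; (iv) the mixed
minor `D_{{0,2,…,n},{1,2,…,n}}(C⁰)` is nonzero (so `C⁰` is a regular point of
the hypersurface `{det = 0}`).  Moreover `C⁰` lies in the boundary of
`𝒞_{Λ^n}`: it belongs to the closure of `𝒞_{Λ^n}` but not to `𝒞_{Λ^n}`. -/
theorem boundary_point_hyperbolic_gram
    (n : ℕ) (hn : 2 ≤ n) :
    ∃ C : Matrix (Fin (n + 1)) (Fin (n + 1)) ℝ,
      C.IsSymm ∧ (∀ j, C j j = 1) ∧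
      C.det = 0 ∧
      (∀ j k, j ≠ k → 1 < C j k) ∧
      (∀ I : Finset (Fin (n + 1)), 2 ≤ I.card → I.card ≤ n →
        (-1 : ℝ) ^ I.card * principalMinor n I C < 0) ∧
      mixedMinor n C ≠ 0 ∧
      C ∈ closure (lobachevskyGram n) ∧ C ∉ lobachevskyGram n := by
  obtain ⟨d, rfl⟩ : ∃ d, n = d + 1 := ⟨n - 1, by omega⟩
  refine ⟨flatGram d, LinearMap.BilinForm.transpose_gram minkowski_isSymm _,
    fun j => minkowski_hyperboloidLift_self _, det_flatGram,
    fun j k hjk => one_lt_minkowski_hyperboloidLift ((flatConfig_injective (by omega)).ne hjk),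
    fun I hI hIn => neg_one_pow_card_mul_principalMinor_flatGram_neg
      (Finset.card_pos.mp (by omega)) ?_,
    mixedMinor_flatGram_ne_zero, flatGram_mem_closure, flatGram_not_mem_lobachevskyGram⟩
  rintro rfl
  simp at hIn
end

section
/- Let n ≥ 2. There exists a positive semidefinite matrix C⁰ = (c⁰_{jk}) ∈ 𝒢_(n)(ℝ) such that: (i) D(C⁰) = det C⁰ = 0; (ii) D_I(C⁰) > 0 for every subset I ⊆ {0,…,n} with 2 ≤ |I| ≤ n (in particular −1 < c⁰_{jk} < 1 for all j ≠ k); (iii) the mixed minor D_{{0,2,…,n},{1,2,…,n}}(C⁰) (rows {0,2,…,n}, columns {1,2,…,n}) is nonzero, so that the differential of the determinant at C⁰ is nonzero and C⁰ is a regular point of the hypersurface {det = 0}. Moreover, C⁰ lies in the boundary of the set 𝒞_{S^n} of positive definite matrices in 𝒢_(n)(ℝ). (Such C⁰ is obtained as the Gram matrix of n+1 unit vectors of ℝ^{n+1} lying in a common hyperplane so that every n of them are linearly independent.) -/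
/-- The set `𝒞_{S^n}` of Gram matrices of vertices of non-degenerate simplices
in the unit sphere `S^n`: positive definite real symmetric matrices with units
on the diagonal. -/
def sphericalGram (n : ℕ) : Set (Matrix (Fin (n + 1)) (Fin (n + 1)) ℝ) :=
  {C | C.IsSymm ∧ (∀ j, C j j = 1) ∧ C.PosDef}

open Matrix Finset

namespace Matrix

variable {α R : Type*} [DecidableEq α]

def equiangularGram [One R] (b : R) : Matrix α α R :=
  of fun i j => if i = j then 1 else b

@[simp]
lemma equiangularGram_apply [One R] (b : R) (i j : α) :
    equiangularGram b i j = if i = j then 1 else b :=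
  rfl

lemma isSymm_equiangularGram [One R] (b : R) : (equiangularGram b : Matrix α α R).IsSymm := by
  ext i j
  simp [eq_comm]

lemma submatrix_equiangularGram [One R] {β : Type*} [DecidableEq β] (b : R) {f : β → α}
    (hf : Function.Injective f) :
    (equiangularGram b).submatrix f f = (equiangularGram b : Matrix β β R) := by
  ext i j
  simp [hf.eq_iff]

lemma equiangularGram_eq_smul_one_add [CommRing R] (b : R) :
    (equiangularGram b : Matrix α α R) = (1 - b) • 1 + of fun _ _ => b := by
  ext i j
  by_cases h : i = j <;> simp [h]

lemma det_equiangularGram [Fintype α] [Field R] {b : R} (hb : b ≠ 1) {m : ℕ}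
    (hm : Fintype.card α = m + 1) :
    (equiangularGram b : Matrix α α R).det = (1 - b) ^ m * (1 + m * b) := by
  have h1b : (1 : R) - b ≠ 0 := sub_ne_zero.mpr hb.symm
  have hrank_one : (equiangularGram b : Matrix α α R) =
      (1 - b) • (1 + replicateCol Unit (fun _ : α => b / (1 - b)) *
        replicateRow Unit (fun _ : α => (1 : R))) := by
    rw [equiangularGram_eq_smul_one_add, smul_add]
    congr 1
    ext i j
    simp [mul_apply, mul_div_cancel₀ _ h1b]
  rw [hrank_one, det_smul, det_one_add_replicateCol_mul_replicateRow, hm]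
  simp only [dotProduct, one_mul, sum_const, card_univ, hm, nsmul_eq_mul]
  field_simp
  push_cast
  ring

lemma dotProduct_equiangularGram_mulVec [Fintype α] [CommRing R] (b : R) (x : α → R) :
    x ⬝ᵥ (equiangularGram b *ᵥ x) = (1 - b) * ∑ i, x i ^ 2 + b * (∑ i, x i) ^ 2 := by
  have hconst : (of fun _ _ => b : Matrix α α R) *ᵥ x = fun _ => b * ∑ i, x i := by
    ext i
    simp [mulVec, dotProduct, mul_sum]
  rw [equiangularGram_eq_smul_one_add, add_mulVec, smul_mulVec, one_mulVec, hconst,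
    dotProduct_add, dotProduct_smul]
  simp only [dotProduct, smul_eq_mul, ← sum_mul, ← sq]
  ring

lemma posSemidef_equiangularGram [Fintype α] {b : ℝ} {m : ℕ} (hm : Fintype.card α = m + 1)
    (hb : b ≤ 1) (hmb : 0 ≤ 1 + m * b) : (equiangularGram b : Matrix α α ℝ).PosSemidef := by
  refine .of_dotProduct_mulVec_nonneg (isHermitian_iff_isSymm.mpr (isSymm_equiangularGram b))
    fun x => ?_
  rw [star_trivial, dotProduct_equiangularGram_mulVec]
  have hsq : 0 ≤ ∑ i, x i ^ 2 := by positivity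
  rcases le_or_gt 0 b with hb0 | hb0
  · positivity
  · -- Cauchy–Schwarz, `(∑ xᵢ)² ≤ (m + 1) ∑ xᵢ²`, bounds the negative term
    have hcs : (∑ i, x i) ^ 2 ≤ (m + 1) * ∑ i, x i ^ 2 := by
      simpa [hm] using sq_sum_le_card_mul_sum_sq (s := univ) (f := x)
    nlinarith

lemma det_updateRow_zero_equiangularGram [CommRing R] (N : ℕ) (b : R) :
    ((equiangularGram b : Matrix (Fin (N + 1)) (Fin (N + 1)) R).updateRow 0 fun _ => b).det
      = b * (1 - b) ^ N := by
  set T : Matrix (Fin (N + 1)) (Fin (N + 1)) R :=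
    of fun i j => if i = 0 then b else if i = j then 1 - b else 0
  -- subtracting row `0` from every other row leaves the upper triangular `T`
  have hT : T.IsUpperTriangular := by
    intro i j (hji : j < i)
    simp [T, ((Fin.zero_le j).trans_lt hji).ne', hji.ne']
  rw [det_eq_of_forall_row_eq_smul_add_const (fun i => if i = 0 then 0 else 1) 0 (by simp)
      (B := T) fun i j => ?_, det_of_isUpperTriangular hT, Fin.prod_univ_succ]
  · simp [T, Fin.succ_ne_zero]
  · cases i using Fin.cases with
    | zero => simp [T]
    | succ i =>
      by_cases hij : i.succ = j
      · subst hij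
        simp [T, Fin.succ_ne_zero]
      · simp [T, Fin.succ_ne_zero, hij]

end Matrix

lemma principalMinor_equiangularGram {n : ℕ} (I : Finset (Fin (n + 1))) {b : ℝ} (hb : b ≠ 1)
    {m : ℕ} (hI : #I = m + 1) :
    principalMinor n I (equiangularGram b) = (1 - b) ^ m * (1 + m * b) := by
  rw [principalMinor, submatrix_equiangularGram b Subtype.val_injective,
    det_equiangularGram hb (by simpa using hI)]

lemma mixedMinor_equiangularGram (N : ℕ) (b : ℝ) :
    mixedMinor (N + 1) (equiangularGram b) = b * (1 - b) ^ N := by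
  rw [mixedMinor, ← det_updateRow_zero_equiangularGram]
  congr 1
  ext i j
  cases i using Fin.cases <;> simp [updateRow_apply, Fin.succ_ne_zero, eq_comm]

lemma smul_add_smul_one_mem_sphericalGram {n : ℕ} {C : Matrix (Fin (n + 1)) (Fin (n + 1)) ℝ}
    (hC : C.PosSemidef) (hdiag : ∀ j, C j j = 1) {t : ℝ} (ht : t ∈ Set.Ioc 0 1) :
    (1 - t) • C + t • 1 ∈ sphericalGram n := by
  have hpd : ((1 - t) • C + t • 1).PosDef :=
    PosDef.posSemidef_add (hC.smul (sub_nonneg.mpr ht.2)) (PosDef.one.smul ht.1)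
  exact ⟨isHermitian_iff_isSymm.mp hpd.isHermitian, fun j => by simp [hdiag], hpd⟩

lemma mem_closure_sphericalGram {n : ℕ} {C : Matrix (Fin (n + 1)) (Fin (n + 1)) ℝ}
    (hC : C.PosSemidef) (hdiag : ∀ j, C j j = 1) : C ∈ closure (sphericalGram n) := by
  have hpath : Filter.Tendsto (fun t : ℝ => (1 - t) • C + t • 1) (nhdsWithin 0 (Set.Ioi 0))
      (nhds C) := by
    have hcont : Continuous fun t : ℝ => (1 - t) • C + t • (1 : Matrix _ _ ℝ) := by fun_prop
    simpa using (hcont.tendsto 0).mono_left nhdsWithin_le_nhds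
  exact mem_closure_of_tendsto hpath <| Filter.mem_of_superset (Ioc_mem_nhdsGT one_pos)
    fun t ht => smul_add_smul_one_mem_sphericalGram hC hdiag ht

/-- For `n ≥ 2` there exists a positive semidefinite real
symmetric matrix `C⁰` with unit diagonal such that: (i) `det C⁰ = 0`;
(ii) `D_I(C⁰) > 0` for every `I` with `2 ≤ |I| ≤ n` (in particular
`-1 < c⁰_{jk} < 1` for `j ≠ k`); (iii) the mixed minor
`D_{{0,2,…,n},{1,2,…,n}}(C⁰)` is nonzero (so `C⁰` is a regular point of the
hypersurface `{det = 0}`).  Moreover `C⁰` lies in the boundary of `𝒞_{S^n}`: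
it belongs to the closure of `𝒞_{S^n}` but not to `𝒞_{S^n}`. -/
theorem boundary_point_spherical_gram
    (n : ℕ) (hn : 2 ≤ n) :
    ∃ C : Matrix (Fin (n + 1)) (Fin (n + 1)) ℝ,
      C.IsSymm ∧ (∀ j, C j j = 1) ∧ C.PosSemidef ∧
      C.det = 0 ∧
      (∀ I : Finset (Fin (n + 1)), 2 ≤ I.card → I.card ≤ n →
        0 < principalMinor n I C) ∧
      (∀ j k, j ≠ k → -1 < C j k ∧ C j k < 1) ∧
      mixedMinor n C ≠ 0 ∧
      C ∈ closure (sphericalGram n) ∧ C ∉ sphericalGram n := by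
  obtain ⟨N, rfl⟩ : ∃ N, n = N + 1 := ⟨n - 1, by omega⟩
  set b : ℝ := -1 / (N + 1)
  have hNb : (N + 1) * b = -1 := by simp only [b]; field_simp
  have hb : -1 < b ∧ b < 0 := by
    have : (1 : ℝ) ≤ N := by exact_mod_cast (by omega : 1 ≤ N)
    constructor <;> nlinarith
  have hb1 : b ≠ 1 := by linarith
  have hpsd : (equiangularGram b : Matrix (Fin (N + 2)) _ ℝ).PosSemidef :=
    posSemidef_equiangularGram (m := N + 1) (by simp) (by linarith) (by push_cast; linarith)
  have hdet : (equiangularGram b : Matrix (Fin (N + 2)) _ ℝ).det = 0 := by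
    rw [det_equiangularGram hb1 (m := N + 1) (by simp)]
    push_cast
    simp [hNb]
  refine ⟨equiangularGram b, isSymm_equiangularGram b, by simp, hpsd, hdet, fun I hI2 hIn => ?_,
    fun j k hjk => by simp [hjk, hb.1, hb.2.trans one_pos], ?_,
    mem_closure_sphericalGram hpsd (by simp), fun h => h.2.2.det_pos.ne' hdet⟩
  · obtain ⟨m, hm⟩ : ∃ m, #I = m + 1 := ⟨#I - 1, by omega⟩
    have hmN : (m : ℝ) + 1 ≤ N + 1 := by exact_mod_cast (by omega : m + 1 ≤ N + 1)
    rw [principalMinor_equiangularGram I hb1 hm]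
    exact mul_pos (pow_pos (by linarith) m) (by nlinarith)
  · rw [mixedMinor_equiangularGram]
    exact mul_ne_zero hb.2.ne (pow_ne_zero _ (by linarith))
end

section
/- Let n ≥ 1. Let Ω = {C ∈ 𝒢_(n)(ℝ) : D_I(C) ≠ 0 for every subset I ⊆ {0,…,n} with |I| ≥ 2}. Then the set 𝒞_{S^n} of positive definite matrices in 𝒢_(n)(ℝ) is a nonempty connected component of Ω. -/
/-- The set `Ω` of real symmetric matrices with unit diagonal all of whose
principal minors of size `≥ 2` are nonzero. -/
def nondegenerateGram (n : ℕ) : Set (Matrix (Fin (n + 1)) (Fin (n + 1)) ℝ) :=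
  {C | C.IsSymm ∧ (∀ j, C j j = 1) ∧
    ∀ I : Finset (Fin (n + 1)), 2 ≤ I.card → principalMinor n I C ≠ 0}

open Matrix Set Filter Topology
open scoped Set.Notation

theorem IsPreconnected.connectedComponentIn_eq_of_isClopen {α : Type*} [TopologicalSpace α]
    {s t : Set α} {x : α} (hs : IsPreconnected s) (hst : s ⊆ t) (hclopen : IsClopen (t ↓∩ s))
    (hx : x ∈ s) : _root_.connectedComponentIn t x = s := by
  refine subset_antisymm ?_ (hs.subset_connectedComponentIn hx hst)
  rw [hclopen.biUnion_connectedComponentIn hst]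
  exact subset_biUnion_of_mem (u := _root_.connectedComponentIn t) hx

theorem isClopen_preimage_val_of_eq_inter {α : Type*} [TopologicalSpace α] {s t U F : Set α}
    (hU : IsOpen U) (hF : IsClosed F) (hsU : s = t ∩ U) (hsF : s = t ∩ F) :
    IsClopen (t ↓∩ s) := by
  constructor
  · rw [hsF, Subtype.preimage_coe_self_inter]
    exact hF.preimage continuous_subtype_val
  · rw [hsU, Subtype.preimage_coe_self_inter]
    exact hU.preimage continuous_subtype_val

section QuadraticForm

variable {ι : Type*} [Fintype ι]

theorem continuous_dotProduct_mulVec :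
    Continuous fun p : Matrix ι ι ℝ × (ι → ℝ) => p.2 ⬝ᵥ p.1 *ᵥ p.2 :=
  continuous_snd.dotProduct (continuous_fst.matrix_mulVec continuous_snd)

theorem isClosed_setOf_dotProduct_mulVec_nonneg :
    IsClosed {A : Matrix ι ι ℝ | ∀ x, 0 ≤ x ⬝ᵥ A *ᵥ x} := by
  simp only [ofPred_forall]
  exact isClosed_iInter fun x => isClosed_le continuous_const
    (continuous_dotProduct_mulVec.comp (continuous_id.prodMk continuous_const))

theorem isOpen_setOf_dotProduct_mulVec_pos :
    IsOpen {A : Matrix ι ι ℝ | ∀ x ≠ 0, 0 < x ⬝ᵥ A *ᵥ x} := by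
  refine isOpen_iff_eventually.2 fun A hA => ?_
  -- positivity on the compact unit sphere persists near `A`, and the form is homogeneous
  have hsphere : ∀ᶠ B in 𝓝 A, ∀ y ∈ Metric.sphere (0 : ι → ℝ) 1, 0 < y ⬝ᵥ B *ᵥ y :=
    (isCompact_sphere 0 1).eventually_forall_of_forall_eventually fun y hy =>
      (isOpen_lt continuous_const continuous_dotProduct_mulVec).mem_nhds
        (hA y (ne_zero_of_mem_unit_sphere ⟨y, hy⟩))
  filter_upwards [hsphere] with B hB x hx
  have hc : 0 < ‖x‖⁻¹ := inv_pos.2 (norm_pos_iff.2 hx)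
  have hy := hB (‖x‖⁻¹ • x) (by simp [norm_smul, hx])
  rw [mulVec_smul, smul_dotProduct, dotProduct_smul, smul_eq_mul, smul_eq_mul] at hy
  exact pos_of_mul_pos_right (pos_of_mul_pos_right hy hc.le) hc.le

end QuadraticForm

section GramMatrix

variable {n : ℕ}

theorem one_mem_sphericalGram : (1 : Matrix (Fin (n + 1)) (Fin (n + 1)) ℝ) ∈ sphericalGram n :=
  ⟨isSymm_one, fun j => one_apply_eq j, PosDef.one⟩

theorem sphericalGram_subset_nondegenerateGram : sphericalGram n ⊆ nondegenerateGram n :=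
  fun _ ⟨hsymm, hdiag, hpos⟩ =>
    ⟨hsymm, hdiag, fun _ _ => (hpos.submatrix Subtype.val_injective).det_pos.ne'⟩

theorem principalMinor_univ (C : Matrix (Fin (n + 1)) (Fin (n + 1)) ℝ) :
    principalMinor n Finset.univ C = C.det :=
  det_submatrix_equiv_self (Equiv.subtypeUnivEquiv Finset.mem_univ) C

theorem convex_sphericalGram : Convex ℝ (sphericalGram n) := by
  refine convex_iff_pairwise_pos.2 fun A hA B hB _ a b ha hb hab => ⟨?_, fun j => ?_, ?_⟩
  · simp [IsSymm, transpose_add, transpose_smul, hA.1.eq, hB.1.eq]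
  · simp [hA.2.1 j, hB.2.1 j, hab]
  · exact (hA.2.2.smul ha).add (hB.2.2.smul hb)

theorem sphericalGram_eq_inter_setOf_dotProduct_mulVec_pos :
    sphericalGram n = nondegenerateGram n ∩ {C | ∀ x ≠ 0, 0 < x ⬝ᵥ C *ᵥ x} := by
  ext C
  refine ⟨fun hC => ⟨sphericalGram_subset_nondegenerateGram hC, fun x hx => ?_⟩,
    fun ⟨hC, hpos⟩ => ⟨hC.1, hC.2.1, ?_⟩⟩
  · simpa using hC.2.2.dotProduct_mulVec_pos hx
  · exact .of_dotProduct_mulVec_pos (isHermitian_iff_isSymm.2 hC.1) (by simpa using hpos)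

theorem sphericalGram_eq_inter_setOf_dotProduct_mulVec_nonneg (hn : 1 ≤ n) :
    sphericalGram n = nondegenerateGram n ∩ {C | ∀ x, 0 ≤ x ⬝ᵥ C *ᵥ x} := by
  ext C
  refine ⟨fun hC => ⟨sphericalGram_subset_nondegenerateGram hC, fun x => ?_⟩,
    fun ⟨hC, hnonneg⟩ => ⟨hC.1, hC.2.1, ?_⟩⟩
  · simpa using hC.2.2.posSemidef.dotProduct_mulVec_nonneg x
  · have hpsd : C.PosSemidef :=
      .of_dotProduct_mulVec_nonneg (isHermitian_iff_isSymm.2 hC.1) (by simpa using hnonneg)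
    have hdet : C.det ≠ 0 := by
      rw [← principalMinor_univ]
      exact hC.2.2 Finset.univ (by simp only [Finset.card_univ, Fintype.card_fin]; omega)
    exact hpsd.posDef_iff_det_ne_zero.2 hdet

end GramMatrix

/-- For `n ≥ 1`, the set `𝒞_{S^n}` of positive definite
matrices in `𝒢_(n)(ℝ)` is a nonempty connected component of
`Ω = {C ∈ 𝒢_(n)(ℝ) : D_I(C) ≠ 0 for all |I| ≥ 2}`: it is nonempty, contained
in `Ω`, and equals the connected component in `Ω` of each of its points. -/
theorem spherical_gram_connected_component
    (n : ℕ) (hn : 1 ≤ n) :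
    (sphericalGram n).Nonempty ∧
    sphericalGram n ⊆ nondegenerateGram n ∧
    ∀ C ∈ sphericalGram n,
      connectedComponentIn (nondegenerateGram n) C = sphericalGram n :=
  ⟨⟨1, one_mem_sphericalGram⟩, sphericalGram_subset_nondegenerateGram, fun _ hC =>
    convex_sphericalGram.isPreconnected.connectedComponentIn_eq_of_isClopen
      sphericalGram_subset_nondegenerateGram
      (isClopen_preimage_val_of_eq_inter isOpen_setOf_dotProduct_mulVec_pos
        isClosed_setOf_dotProduct_mulVec_nonneg
        sphericalGram_eq_inter_setOf_dotProduct_mulVec_pos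
        (sphericalGram_eq_inter_setOf_dotProduct_mulVec_nonneg hn)) hC⟩
end

section
/- Let n ≥ 1. Let Ω = {C ∈ 𝒢_(n)(ℝ) : D_I(C) ≠ 0 for every subset I ⊆ {0,…,n} with |I| ≥ 2}. Then the set 𝒞_{Λ^n} = {C ∈ 𝒢_(n)(ℝ) : c_{jk} > 1 for all j ≠ k, and (−1)^{|I|} D_I(C) < 0 for every I ⊆ {0,…,n} with |I| ≥ 2} is a nonempty connected component of Ω. -/
/-!
Every `C ∈ 𝒞` is the Gram matrix, for the Lorentz form `t s - ⟪x, y⟫` on `ℝ × ℝⁿ`, of the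
hyperboloid points `(√(1 + ‖y_j‖²), y_j)`, where `y_0 = 0` and `y_1, …, y_n` are the columns of
the Cholesky factor of minus the Schur complement of `c_00` in `C`. Conversely every upper
triangular `Y` with positive diagonal yields a point of `𝒞`: the sign of the Gram minors comes from
the Lorentz form being negative definite on the orthogonal complement of a timelike vector. Hence
`𝒞` is a continuous image of a convex set. On a preconnected subset of `Ω` the continuous
functions `(-1)^|I| D_I` and `1 - c_jk` never vanish (the latter because `D_{jk} = 1 - c_jk²`), so
they keep the negative sign they have at a point of `𝒞`.
-/

open Matrix Finset

section Schur
variable {K : Type*} [Field K] {m : ℕ}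

def schurComplementZero (M : Matrix (Fin (m + 1)) (Fin (m + 1)) K) : Matrix (Fin m) (Fin m) K :=
  of fun i j => M i.succ j.succ - M i.succ 0 * M 0 j.succ / M 0 0

theorem det_eq_mul_det_schurComplementZero (M : Matrix (Fin (m + 1)) (Fin (m + 1)) K)
    (h : M 0 0 ≠ 0) : M.det = M 0 0 * (schurComplementZero M).det := by
  set B : Matrix (Fin (m + 1)) (Fin (m + 1)) K :=
    of fun i j => if i = 0 then M 0 j else M i j - M i 0 / M 0 0 * M 0 j
  have hMB : M.det = B.det :=
    det_eq_of_forall_row_eq_smul_add_const (fun i => if i = 0 then 0 else M i 0 / M 0 0) 0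
      (by simp) fun i j => by by_cases hi : i = 0 <;> simp [B, hi]
  rw [hMB, det_succ_column_zero, Fin.sum_univ_succ, Finset.sum_eq_zero fun i _ => by
    simp [B, h]]
  simp only [B, Fin.val_zero, pow_zero, one_mul, of_apply, if_pos, add_zero]
  congr 2
  ext i j
  simp [schurComplementZero, Fin.succ_ne_zero]
  ring

theorem schurComplementZero_submatrix_castLE (M : Matrix (Fin (m + 1)) (Fin (m + 1)) K) {k : ℕ}
    (hk : k ≤ m) :
    (schurComplementZero M).submatrix (Fin.castLE hk) (Fin.castLE hk) =
      schurComplementZero (M.submatrix (Fin.castLE (Nat.succ_le_succ hk))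
        (Fin.castLE (Nat.succ_le_succ hk))) := by
  ext i j
  simp [schurComplementZero]

theorem Matrix.IsSymm.schurComplementZero {M : Matrix (Fin (m + 1)) (Fin (m + 1)) K}
    (hM : M.IsSymm) : (schurComplementZero M).IsSymm := by
  ext i j
  simp only [transpose_apply, _root_.schurComplementZero, of_apply, hM.apply]
  ring

end Schur

theorem exists_isUpperTriangular_transpose_mul_self {m : ℕ} (A : Matrix (Fin m) (Fin m) ℝ)
    (hA : A.IsSymm)
    (hmin : ∀ (k : ℕ) (hk : k ≤ m), 0 < (A.submatrix (Fin.castLE hk) (Fin.castLE hk)).det) :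
    ∃ Y : Matrix (Fin m) (Fin m) ℝ, Y.IsUpperTriangular ∧ (∀ i, 0 < Y i i) ∧ Yᵀ * Y = A := by
  induction m with
  | zero => exact ⟨0, fun i => i.elim0, fun i => i.elim0, Subsingleton.elim _ _⟩
  | succ m ih =>
    have hα : 0 < A 0 0 := by simpa [det_fin_one] using hmin 1 (by omega)
    have hSmin (k : ℕ) (hk : k ≤ m) :
        0 < ((schurComplementZero A).submatrix (Fin.castLE hk) (Fin.castLE hk)).det := by
      have h := hmin (k + 1) (Nat.succ_le_succ hk)
      rw [det_eq_mul_det_schurComplementZero _ (by simpa using hα.ne'),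
        ← schurComplementZero_submatrix_castLE _ hk] at h
      exact pos_of_mul_pos_right h (by simpa using hα.le)
    obtain ⟨Y', hY'tri, hY'diag, hY'⟩ := ih _ hA.schurComplementZero hSmin
    set s := √(A 0 0)
    have hs : 0 < s := Real.sqrt_pos.2 hα
    have hs2 : s ^ 2 = A 0 0 := Real.sq_sqrt hα.le
    refine ⟨of (Fin.cons (Fin.cons s fun j => A 0 j.succ / s) fun i => Fin.cons 0 (Y' i)),
      ?_, ?_, ?_⟩
    · intro i j hji
      induction i using Fin.cases with
      | zero => exact absurd hji (Fin.not_lt_zero j)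
      | succ i =>
        induction j using Fin.cases with
        | zero => simp
        | succ j => simpa using hY'tri (Fin.succ_lt_succ_iff.1 hji)
    · intro i
      induction i using Fin.cases with
      | zero => simpa using hs
      | succ i => simpa using hY'diag i
    · have hY'apply (i j : Fin m) : ∑ l, Y' l i * Y' l j = schurComplementZero A i j := by
        rw [← hY']; rfl
      ext i j
      induction i using Fin.cases <;> induction j using Fin.cases <;>
        simp only [mul_apply, Fin.sum_univ_succ, transpose_apply, of_apply, Fin.cons_zero,
          Fin.cons_succ, zero_mul, mul_zero, Finset.sum_const_zero, add_zero, hY'apply,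
          schurComplementZero, hA.apply] <;> field_simp
      all_goals rw [hs2]; try ring

section GramMatrix
variable {E : Type*} [AddCommGroup E] [Module ℝ E] (B : LinearMap.BilinForm ℝ E)

theorem dotProduct_gram_mulVec {ι : Type*} [Fintype ι] (w : ι → E) (x : ι → ℝ) :
    x ⬝ᵥ (of (fun i j => B (w i) (w j)) *ᵥ x) = B (∑ i, x i • w i) (∑ i, x i • w i) := by
  simp only [dotProduct, mulVec, of_apply, map_sum, map_smul, LinearMap.sum_apply,
    LinearMap.smul_apply, smul_eq_mul, Finset.mul_sum]
  rw [Finset.sum_comm]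
  exact sum_congr rfl fun i _ => sum_congr rfl fun j _ => by ring

theorem posDef_neg_gram {ι : Type*} [Fintype ι] (hB : B.IsSymm) (w : ι → E)
    (hneg : ∀ x : ι → ℝ, x ≠ 0 → B (∑ i, x i • w i) (∑ i, x i • w i) < 0) :
    (-of fun i j => B (w i) (w j)).PosDef := by
  refine posDef_iff_dotProduct_mulVec.2 ⟨?_, fun x hx => ?_⟩
  · ext i j
    simp [hB.eq (w i) (w j)]
  · rw [star_trivial, neg_mulVec, dotProduct_neg, dotProduct_gram_mulVec]
    exact neg_pos.2 (hneg x hx)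

theorem neg_one_pow_mul_det_gram_neg (hB : B.IsSymm) {m : ℕ} (v : Fin (m + 1) → E)
    (hv : LinearIndependent ℝ v) (hv0 : B (v 0) (v 0) = 1)
    (hneg : ∀ u, B (v 0) u = 0 → u ≠ 0 → B u u < 0) :
    (-1) ^ (m + 1) * (of fun j k => B (v j) (v k)).det < 0 := by
  set w : Fin m → E := fun i => v i.succ - B (v 0) (v i.succ) • v 0
  have hschur :
      schurComplementZero (of fun j k => B (v j) (v k)) = of fun i j => B (w i) (w j) := by
    ext i j
    simp [schurComplementZero, w, hv0, hB.eq (v i.succ) (v 0)]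
    ring
  have hw_orth (x : Fin m → ℝ) : B (v 0) (∑ i, x i • w i) = 0 := by
    simp [w, hv0]
  have hw_ne (x : Fin m → ℝ) (hx : x ≠ 0) : ∑ i, x i • w i ≠ 0 := by
    intro hsum
    have hcomb : ∑ j, (Fin.cons (-∑ i, x i * B (v 0) (v i.succ)) x : Fin (m + 1) → ℝ) j • v j
        = ∑ i, x i • w i := by
      simp [Fin.sum_univ_succ, w, smul_sub, Finset.sum_sub_distrib, Finset.sum_smul, mul_smul,
        neg_add_eq_sub]
    have := Fintype.linearIndependent_iff.1 hv _ (hcomb.trans hsum)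
    exact hx (funext fun i => by simpa using this i.succ)
  have hpos := (posDef_neg_gram B hB w fun x hx =>
    hneg _ (hw_orth x) (hw_ne x hx)).det_pos
  rw [det_neg, Fintype.card_fin] at hpos
  rw [det_eq_mul_det_schurComplementZero _ (by simp [hv0]), of_apply, hv0, one_mul, hschur,
    pow_succ]
  linarith

end GramMatrix

noncomputable section Lorentz
variable {E : Type*} [NormedAddCommGroup E] [InnerProductSpace ℝ E]

variable (E) in
def lorentzForm : LinearMap.BilinForm ℝ (ℝ × E) :=
  (LinearMap.mul ℝ ℝ).compl₁₂ (LinearMap.fst ℝ ℝ E) (LinearMap.fst ℝ ℝ E) -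
    (innerₗ E).compl₁₂ (LinearMap.snd ℝ ℝ E) (LinearMap.snd ℝ ℝ E)

@[simp]
theorem lorentzForm_apply (x y : ℝ × E) : lorentzForm E x y = x.1 * y.1 - inner ℝ x.2 y.2 := rfl

theorem lorentzForm_isSymm : (lorentzForm E).IsSymm :=
  ⟨fun x y => by simp [mul_comm, real_inner_comm]⟩

theorem continuous_lorentzForm :
    Continuous fun p : (ℝ × E) × (ℝ × E) => lorentzForm E p.1 p.2 := by
  simp only [lorentzForm_apply]
  fun_prop

theorem lorentzForm_self_neg_of_orthogonal {p u : ℝ × E} (hp : 0 < lorentzForm E p p)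
    (hpu : lorentzForm E p u = 0) (hu : u ≠ 0) : lorentzForm E u u < 0 := by
  rw [lorentzForm_apply, real_inner_self_eq_norm_sq] at hp ⊢
  rw [lorentzForm_apply, sub_eq_zero] at hpu
  have hcs : (p.1 * u.1) ^ 2 ≤ ‖p.2‖ ^ 2 * ‖u.2‖ ^ 2 := by
    rw [hpu, ← mul_pow, ← sq_abs]
    exact pow_le_pow_left₀ (abs_nonneg _) (abs_real_inner_le_norm _ _) 2
  have hu2 : u.2 ≠ 0 := by
    intro hu2
    have hp1 : p.1 ≠ 0 := by rintro h; nlinarith [norm_nonneg p.2]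
    have hu1 : u.1 = 0 := by simpa [hu2, hp1] using hpu
    exact hu (Prod.ext hu1 hu2)
  have hu2pos : 0 < ‖u.2‖ ^ 2 := pow_pos (norm_pos_iff.2 hu2) 2
  have h : p.1 ^ 2 * u.1 ^ 2 < p.1 ^ 2 * ‖u.2‖ ^ 2 := by
    rw [← mul_pow]
    nlinarith [mul_lt_mul_of_pos_right (show ‖p.2‖ ^ 2 < p.1 ^ 2 by nlinarith) hu2pos]
  nlinarith [lt_of_mul_lt_mul_left h (sq_nonneg _)]

def hyperboloidPoint (y : E) : ℝ × E := (√(1 + ‖y‖ ^ 2), y)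

omit [InnerProductSpace ℝ E] in
theorem continuous_hyperboloidPoint : Continuous (hyperboloidPoint : E → ℝ × E) := by
  unfold hyperboloidPoint
  fun_prop

theorem lorentzForm_hyperboloidPoint_self (y : E) :
    lorentzForm E (hyperboloidPoint y) (hyperboloidPoint y) = 1 := by
  rw [lorentzForm_apply, ← sq, real_inner_self_eq_norm_sq, hyperboloidPoint,
    Real.sq_sqrt (by positivity)]
  ring

theorem one_lt_lorentzForm_hyperboloidPoint {y z : E} (h : y ≠ z) :
    1 < lorentzForm E (hyperboloidPoint y) (hyperboloidPoint z) := by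
  have hcs : inner ℝ y z ^ 2 ≤ ‖y‖ ^ 2 * ‖z‖ ^ 2 := by
    rw [← mul_pow, ← sq_abs]
    exact pow_le_pow_left₀ (abs_nonneg _) (abs_real_inner_le_norm _ _) 2
  have hyz : 0 < ‖y - z‖ ^ 2 := pow_pos (norm_pos_iff.2 (sub_ne_zero.2 h)) 2
  rw [norm_sub_sq_real] at hyz
  have key : (1 + inner ℝ y z) ^ 2 < (1 + ‖y‖ ^ 2) * (1 + ‖z‖ ^ 2) := by nlinarith
  simp only [lorentzForm_apply, hyperboloidPoint]
  rw [← Real.sqrt_mul (by positivity), lt_sub_iff_add_lt]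
  exact lt_of_le_of_lt (le_abs_self _) (Real.lt_sqrt (abs_nonneg _) |>.2 (by rwa [sq_abs]))

end Lorentz

theorem principalMinor_map {n : ℕ} {ι : Type*} [Fintype ι] [DecidableEq ι]
    (e : ι ↪ Fin (n + 1)) (C : Matrix (Fin (n + 1)) (Fin (n + 1)) ℝ) :
    principalMinor n (univ.map e) C = (C.submatrix e e).det := by
  let τ : ι ≃ univ.map e := Equiv.ofBijective (fun a => ⟨e a, mem_map_of_mem e (mem_univ a)⟩)
    ⟨fun a b h => e.injective (congrArg Subtype.val h), fun ⟨x, hx⟩ => by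
      obtain ⟨a, -, rfl⟩ := mem_map.1 hx
      exact ⟨a, rfl⟩⟩
  rw [principalMinor, ← det_submatrix_equiv_self τ]
  rfl

theorem principalMinor_pair {n : ℕ} (C : Matrix (Fin (n + 1)) (Fin (n + 1)) ℝ)
    {j k : Fin (n + 1)} (hjk : j ≠ k) :
    principalMinor n {j, k} C = C j j * C k k - C j k * C k j := by
  have hinj : Function.Injective ![j, k] := by
    intro a b; fin_cases a <;> fin_cases b <;> simp [hjk, hjk.symm]
  have he : univ.map ⟨![j, k], hinj⟩ = {j, k} := by
    ext x; simp [Fin.exists_fin_two, eq_comm (a := x)]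
  rw [← he, principalMinor_map, det_fin_two]
  rfl

theorem continuous_principalMinor {n : ℕ} (I : Finset (Fin (n + 1))) :
    Continuous (principalMinor n I) :=
  (continuous_id.matrix_submatrix _ _).matrix_det

theorem lobachevskyGram_subset_nondegenerateGram {n : ℕ} :
    lobachevskyGram n ⊆ nondegenerateGram n :=
  fun _ ⟨hsymm, hdiag, _, hminor⟩ => ⟨hsymm, hdiag, fun I hI h0 => by
    simpa [h0] using hminor I hI⟩

noncomputable section Vertices
variable {n : ℕ}

def upperTriangularPosDiag (n : ℕ) : Set (Matrix (Fin n) (Fin n) ℝ) :=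
  {Y | Y.IsUpperTriangular ∧ ∀ i, 0 < Y i i}

theorem convex_upperTriangularPosDiag : Convex ℝ (upperTriangularPosDiag n) := by
  intro Y ⟨hYtri, hYdiag⟩ Z ⟨hZtri, hZdiag⟩ a b ha hb hab
  refine ⟨fun i j hji => by simp [hYtri hji, hZtri hji], fun i => ?_⟩
  rcases ha.eq_or_lt with rfl | ha
  · simpa [show b = 1 by linarith] using hZdiag i
  · simpa using add_pos_of_pos_of_nonneg (mul_pos ha (hYdiag i)) (mul_nonneg hb (hZdiag i).le)

theorem one_mem_upperTriangularPosDiag :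
    (1 : Matrix (Fin n) (Fin n) ℝ) ∈ upperTriangularPosDiag n :=
  ⟨fun _ _ h => one_apply_ne h.ne', fun _ => by simp⟩

def vertexSpatial (Y : Matrix (Fin n) (Fin n) ℝ) : Fin (n + 1) → EuclideanSpace ℝ (Fin n) :=
  Fin.cons 0 fun j => WithLp.toLp 2 fun i => Y i j

@[simp]
theorem vertexSpatial_zero (Y : Matrix (Fin n) (Fin n) ℝ) : vertexSpatial Y 0 = 0 := rfl

@[simp]
theorem vertexSpatial_succ (Y : Matrix (Fin n) (Fin n) ℝ) (j : Fin n) :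
    vertexSpatial Y j.succ = WithLp.toLp 2 fun i => Y i j := rfl

def simplexVertex (Y : Matrix (Fin n) (Fin n) ℝ) (j : Fin (n + 1)) :
    ℝ × EuclideanSpace ℝ (Fin n) :=
  hyperboloidPoint (vertexSpatial Y j)

def vertexGram (Y : Matrix (Fin n) (Fin n) ℝ) : Matrix (Fin (n + 1)) (Fin (n + 1)) ℝ :=
  of fun j k => lorentzForm _ (simplexVertex Y j) (simplexVertex Y k)

theorem continuous_vertexGram : Continuous (vertexGram (n := n)) := by
  have hvertex (j : Fin (n + 1)) :
      Continuous fun Y : Matrix (Fin n) (Fin n) ℝ => simplexVertex Y j := by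
    refine continuous_hyperboloidPoint.comp (f := fun Y => vertexSpatial Y j) ?_
    induction j using Fin.cases with
    | zero => exact continuous_const
    | succ j =>
      exact (PiLp.continuous_toLp 2 _).comp (continuous_pi fun i => continuous_apply_apply i j)
  exact continuous_pi fun j => continuous_pi fun k =>
    continuous_lorentzForm.comp ((hvertex j).prodMk (hvertex k))

theorem linearIndependent_simplexVertex {Y : Matrix (Fin n) (Fin n) ℝ}
    (hY : Y ∈ upperTriangularPosDiag n) : LinearIndependent ℝ (simplexVertex Y) := by
  rw [Fintype.linearIndependent_iff]
  intro g hg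
  have hdet : Y.det ≠ 0 := by
    rw [det_of_isUpperTriangular hY.1]
    exact (prod_pos fun i _ => hY.2 i).ne'
  have htail : Fin.tail g = 0 := by
    refine eq_zero_of_mulVec_eq_zero hdet (funext fun i => ?_)
    simpa [Fin.sum_univ_succ, simplexVertex, hyperboloidPoint, Prod.snd_sum, mulVec, dotProduct,
      Fin.tail, mul_comm] using congrArg (fun x => x.2 i) hg
  have hsucc (i : Fin n) : g i.succ = 0 := congrFun htail i
  have h0 : g 0 = 0 := by
    simpa [Fin.sum_univ_succ, simplexVertex, hyperboloidPoint, Prod.fst_sum, hsucc]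
      using congrArg Prod.fst hg
  intro i
  induction i using Fin.cases with
  | zero => exact h0
  | succ i => exact hsucc i

theorem vertexGram_mem_lobachevskyGram {Y : Matrix (Fin n) (Fin n) ℝ}
    (hY : Y ∈ upperTriangularPosDiag n) : vertexGram Y ∈ lobachevskyGram n := by
  have hv := linearIndependent_simplexVertex hY
  refine ⟨?_, fun j => lorentzForm_hyperboloidPoint_self _, fun j k hjk => ?_, fun I hI => ?_⟩
  · ext j k
    exact lorentzForm_isSymm.eq _ _
  · refine one_lt_lorentzForm_hyperboloidPoint fun h => hjk (hv.injective ?_)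
    rw [simplexVertex, simplexVertex, h]
  · obtain ⟨m, hm⟩ : ∃ m, I.card = m + 1 := ⟨I.card - 1, by omega⟩
    let σ := I.orderEmbOfFin hm
    rw [← I.map_orderEmbOfFin_univ hm, principalMinor_map, card_map, card_fin]
    exact neg_one_pow_mul_det_gram_neg _ lorentzForm_isSymm (simplexVertex Y ∘ σ)
      (hv.comp σ σ.injective) (lorentzForm_hyperboloidPoint_self _)
      fun _ => lorentzForm_self_neg_of_orthogonal (by
        simp only [Function.comp_apply, simplexVertex, lorentzForm_hyperboloidPoint_self, one_pos])

end Vertices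

section Factorization
variable {n : ℕ}

theorem det_neg_schurComplementZero_submatrix_castLE_pos
    {C : Matrix (Fin (n + 1)) (Fin (n + 1)) ℝ} (hC : C ∈ lobachevskyGram n) (k : ℕ) (hk : k ≤ n) :
    0 < (submatrix (-schurComplementZero C) (Fin.castLE hk) (Fin.castLE hk)).det := by
  rcases k with _ | k
  · simp
  have h := hC.2.2.2 (univ.map (Fin.castLEEmb (Nat.succ_le_succ hk))) (by simp)
  rw [principalMinor_map, card_map, card_fin, Fin.coe_castLEEmb,
    det_eq_mul_det_schurComplementZero _ (by simp [hC.2.1]),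
    ← schurComplementZero_submatrix_castLE _ hk] at h
  rw [submatrix_neg, Pi.neg_apply, Pi.neg_apply, det_neg, Fintype.card_fin]
  simp only [submatrix_apply, Fin.castLE_zero, hC.2.1, one_mul, pow_succ] at h ⊢
  linarith

theorem exists_vertexGram_eq {C : Matrix (Fin (n + 1)) (Fin (n + 1)) ℝ}
    (hC : C ∈ lobachevskyGram n) : ∃ Y ∈ upperTriangularPosDiag n, vertexGram Y = C := by
  obtain ⟨Y, htri, hpos, hY⟩ :=
    exists_isUpperTriangular_transpose_mul_self _ hC.1.schurComplementZero.neg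
      (det_neg_schurComplementZero_submatrix_castLE_pos hC)
  obtain ⟨hsymm, hdiag, hoff, -⟩ := hC
  refine ⟨Y, ⟨htri, hpos⟩, ?_⟩
  have hinner (i j : Fin n) : inner ℝ (vertexSpatial Y i.succ) (vertexSpatial Y j.succ) =
      C 0 i.succ * C 0 j.succ - C i.succ j.succ := by
    have := congrFun (congrFun hY i) j
    simp only [mul_apply, transpose_apply, Matrix.neg_apply, schurComplementZero, of_apply,
      hdiag, div_one, hsymm.apply 0 i.succ] at this
    simp only [vertexSpatial_succ, EuclideanSpace.inner_toLp_toLp, dotProduct, star_trivial]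
    rw [← neg_sub, ← this]
    exact sum_congr rfl fun l _ => mul_comm _ _
  have htime (j : Fin n) : √(1 + ‖vertexSpatial Y j.succ‖ ^ 2) = C 0 j.succ := by
    rw [← real_inner_self_eq_norm_sq, hinner, hdiag, add_sub_cancel, Real.sqrt_mul_self]
    exact (one_pos.trans (hoff 0 j.succ (Fin.succ_ne_zero j).symm)).le
  ext j k
  induction j using Fin.cases <;> induction k using Fin.cases <;>
    simp only [vertexGram, of_apply, simplexVertex, hyperboloidPoint, lorentzForm_apply, htime,
      hinner, vertexSpatial_zero, norm_zero, inner_zero_left, inner_zero_right] <;>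
    simp [hdiag, hsymm.apply 0]

end Factorization

theorem IsPreconnected.neg_of_forall_ne_zero {X : Type*} [TopologicalSpace X] {s : Set X}
    (hs : IsPreconnected s) {f : X → ℝ} (hf : ContinuousOn f s) (hf0 : ∀ x ∈ s, f x ≠ 0)
    {a : X} (ha : a ∈ s) (hfa : f a < 0) {x : X} (hx : x ∈ s) : f x < 0 := by
  by_contra! h
  obtain ⟨y, hy, hfy⟩ := hs.intermediate_value ha hx hf ⟨hfa.le, h⟩
  exact hf0 y hy hfy

section Component
variable {n : ℕ}

theorem isPreconnected_lobachevskyGram : IsPreconnected (lobachevskyGram n) := by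
  have himage : lobachevskyGram n = vertexGram '' upperTriangularPosDiag n :=
    Set.Subset.antisymm (fun _ hC => exists_vertexGram_eq hC)
      (Set.image_subset_iff.2 fun _ => vertexGram_mem_lobachevskyGram)
  rw [himage]
  exact convex_upperTriangularPosDiag.isPreconnected.image _ continuous_vertexGram.continuousOn

theorem connectedComponentIn_nondegenerateGram_subset
    {C : Matrix (Fin (n + 1)) (Fin (n + 1)) ℝ} (hC : C ∈ lobachevskyGram n) :
    connectedComponentIn (nondegenerateGram n) C ⊆ lobachevskyGram n := by
  have hS := isPreconnected_connectedComponentIn (F := nondegenerateGram n) (x := C)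
  have hCS := mem_connectedComponentIn (lobachevskyGram_subset_nondegenerateGram hC)
  intro X hX
  obtain ⟨hsymm, hdiag, -⟩ := connectedComponentIn_subset _ _ hX
  refine ⟨hsymm, hdiag, fun j k hjk => ?_, fun I hI => ?_⟩
  · have h := hS.neg_of_forall_ne_zero (f := fun X => 1 - X j k)
      (continuous_const.sub (continuous_apply_apply j k)).continuousOn
      (fun Z hZ h1 => by
        obtain ⟨hZsymm, hZdiag, hZminor⟩ := connectedComponentIn_subset _ _ hZ
        apply hZminor {j, k} (card_pair hjk).ge
        rw [principalMinor_pair Z hjk, hZdiag, hZdiag, hZsymm.apply j k]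
        linear_combination (1 + Z j k) * h1)
      hCS (sub_neg.2 (hC.2.2.1 j k hjk)) hX
    exact sub_neg.1 h
  · exact hS.neg_of_forall_ne_zero
      (continuous_const.mul (continuous_principalMinor I)).continuousOn
      (fun Z hZ => mul_ne_zero (pow_ne_zero _ (by norm_num))
        ((connectedComponentIn_subset _ _ hZ).2.2 I hI))
      hCS (hC.2.2.2 I hI) hX

end Component

theorem lobachevsky_gram_connected_component_general
    (n : ℕ) :
    (lobachevskyGram n).Nonempty ∧
    lobachevskyGram n ⊆ nondegenerateGram n ∧
    ∀ C ∈ lobachevskyGram n,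
      connectedComponentIn (nondegenerateGram n) C = lobachevskyGram n := by
  refine ⟨⟨_, vertexGram_mem_lobachevskyGram one_mem_upperTriangularPosDiag⟩,
    lobachevskyGram_subset_nondegenerateGram, fun C hC => ?_⟩
  exact (connectedComponentIn_nondegenerateGram_subset hC).antisymm
    (isPreconnected_lobachevskyGram.subset_connectedComponentIn hC
      lobachevskyGram_subset_nondegenerateGram)

/-- For `n ≥ 1`, the set `𝒞_{Λ^n}` is a nonempty connected
component of `Ω = {C ∈ 𝒢_(n)(ℝ) : D_I(C) ≠ 0 for all |I| ≥ 2}`: it is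
nonempty, contained in `Ω`, and equals the connected component in `Ω` of each
of its points. -/
theorem lobachevsky_gram_connected_component
    (n : ℕ) (hn : 1 ≤ n) :
    (lobachevskyGram n).Nonempty ∧
    lobachevskyGram n ⊆ nondegenerateGram n ∧
    ∀ C ∈ lobachevskyGram n,
      connectedComponentIn (nondegenerateGram n) C = lobachevskyGram n :=
  lobachevsky_gram_connected_component_general n
end
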